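/- arXiv:1107.2363 — 4 statements merged into one kernel-verified Lean document; each statement's English description precedes it below -/
import Mathlib

section
/- Let G be a finite graph with vertex weights ω taking values in a commutative monoid S and edge weights γ. Then the state-sum V(G) := Σ_{A⊆E(G)} x_{c_1}·x_{c_2}···x_{c_{k(A)}} · ∏_{e∈A} γ_e (where c_i is the sum of the vertex weights in the i-th connected component of the spanning subgraph (V(G),A), and {x_s}_{s∈S} are commuting variables indexed by S) satisfies the deletion-contraction relation V(G) = V(G−e) + γ_e · V(G/e) for every non-loop edge e, where in G/e the new vertex created by contracting e receives as weight the sum of the weights of the two endpoints of e. -/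
open scoped Classical
open Finset

structure VGraph (V E : Type) where
  ends : E → Sym2 V

namespace VGraph

variable {V E S R : Type} [Fintype V] [Fintype E]

/-- Two vertices are joined by an edge of `A`. -/
def adjRel (G : VGraph V E) (A : Finset E) (u v : V) : Prop :=
  ∃ e ∈ A, G.ends e = s(u, v)

/-- The setoid on vertices whose classes are the connected components of the
spanning subgraph `(V, A)`. -/
def compSetoid (G : VGraph V E) (A : Finset E) : Setoid V :=
  ⟨Relation.EqvGen (G.adjRel A), Relation.EqvGen.is_equivalence _⟩

/-- The connected components of the spanning subgraph `(V, A)`. -/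
def Comp (G : VGraph V E) (A : Finset E) : Type := Quotient (G.compSetoid A)

noncomputable instance (G : VGraph V E) (A : Finset E) : Fintype (G.Comp A) :=
  @Quotient.fintype V _ (G.compSetoid A) (Classical.decRel _)

/-- `k(A)`: the number of connected components of the spanning subgraph `(V, A)`. -/
noncomputable def kA (G : VGraph V E) (A : Finset E) : ℕ := Nat.card (G.Comp A)

/-- `u` and `v` are connected in the spanning subgraph `(V, A)`. -/
def Connects (G : VGraph V E) (A : Finset E) (u v : V) : Prop :=
  Relation.EqvGen (G.adjRel A) u v

/-- The endpoints of `e` are connected in the spanning subgraph `(V, A)`. -/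
def EndsConnected (G : VGraph V E) (A : Finset E) (e : E) : Prop :=
  ∃ u v, G.ends e = s(u, v) ∧ G.Connects A u v

def IsLoop (G : VGraph V E) (e : E) : Prop := (G.ends e).IsDiag

/-- `(V, A)` is a forest (acyclic spanning subgraph): every edge of `A` is a bridge of it. -/
def IsForest (G : VGraph V E) (A : Finset E) : Prop :=
  ∀ e ∈ A, ¬ G.EndsConnected (A.erase e) e

/-- All vertices are pairwise connected using edges of `A`. -/
def ConnectsAll (G : VGraph V E) (A : Finset E) : Prop := ∀ u v, G.Connects A u v

/-- A maximal spanning forest: a forest restricting to a spanning tree of each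
connected component of `G`. -/
def IsSpanningTree (G : VGraph V E) (T : Finset E) : Prop :=
  G.IsForest T ∧ ∀ u v, G.Connects T u v ↔ G.Connects Finset.univ u v

/-- `e ∈ T` is internally active: `e` is minimal in the cut
`{f : (T - e) ∪ {f} ∈ 𝒯(G)}`. -/
def IntActive [LinearOrder E] (G : VGraph V E) (T : Finset E) (e : E) : Prop :=
  e ∈ T ∧ ∀ f, G.IsSpanningTree (insert f (T.erase e)) → e ≤ f

/-- The edge set of the unique cycle of `T ∪ {e}` (when it exists):
`e` together with those `f ∈ T` whose removal disconnects the ends of `e`. -/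
noncomputable def cycleEdges (G : VGraph V E) (T : Finset E) (e : E) : Finset E :=
  insert e (T.filter fun f => ¬ G.EndsConnected (T.erase f) e)

/-- `e ∉ T` is externally active: `T ∪ {e}` contains a cycle through `e` and
`e` is the minimal edge of that cycle. -/
def ExtActive [LinearOrder E] (G : VGraph V E) (T : Finset E) (e : E) : Prop :=
  e ∉ T ∧ G.EndsConnected T e ∧ ∀ f ∈ G.cycleEdges T e, e ≤ f

/-- The vertex set of the component `c` of `(V, A)`. -/
noncomputable def compVerts (G : VGraph V E) (A : Finset E) (c : G.Comp A) : Finset V :=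
  Finset.univ.filter fun v => (Quotient.mk (G.compSetoid A) v) = c

/-- The total vertex weight of the component `c` of `(V, A)`. -/
noncomputable def compWeight [AddCommMonoid S] (G : VGraph V E) (A : Finset E)
    (ω : V → S) (c : G.Comp A) : S :=
  ∑ v ∈ G.compVerts A c, ω v

/-- The V-polynomial, defined by its state sum. -/
noncomputable def Vpoly [AddCommMonoid S] [CommRing R] (G : VGraph V E)
    (ω : V → S) (γ : E → R) : MvPolynomial S R :=
  ∑ A : Finset E, (∏ c : G.Comp A, MvPolynomial.X (G.compWeight A ω c)) *
    MvPolynomial.C (∏ e ∈ A, γ e)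

/-- The multivariate Tutte polynomial `Z_T(G; q, γ)` as a polynomial in `q`. -/
noncomputable def ZT [CommRing R] (G : VGraph V E) (γ : E → R) : Polynomial R :=
  ∑ A : Finset E, Polynomial.X ^ (G.kA A) * Polynomial.C (∏ e ∈ A, γ e)

/-- Deletion of the edge `e`. -/
def del (G : VGraph V E) (e : E) : VGraph V {f : E // f ≠ e} := ⟨fun f => G.ends f.1⟩

/-- Contraction of the edge `e`: vertices are the components of `(V, {e})`. -/
noncomputable def contract (G : VGraph V E) (e : E) : VGraph (G.Comp {e}) {f : E // f ≠ e} :=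
  ⟨fun f => (G.ends f.1).map (Quotient.mk (G.compSetoid {e}))⟩

/-- The forest `T` with the edges of `B` contracted: vertices are the components
of `(V, B)` and edges are `T \ B`. -/
noncomputable def contractIn (G : VGraph V E) (T B : Finset E) :
    VGraph (G.Comp B) ↥(T \ B : Finset E) :=
  ⟨fun f => (G.ends f.1).map (Quotient.mk (G.compSetoid B))⟩

/-- The edges of `G` with both ends inside `P`. -/
noncomputable def edgesIn (G : VGraph V E) (P : Finset V) : Finset E :=
  Finset.univ.filter fun e => ∀ v ∈ G.ends e, v ∈ P

/-- The subgraph of `G` induced by the vertex set `P`. -/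
noncomputable def induce (G : VGraph V E) (P : Finset V) : VGraph ↥P ↥(G.edgesIn P) :=
  ⟨fun e => (G.ends e.1).pmap (fun v hv => (⟨v, hv⟩ : ↥P))
    (by have he := e.2; simp only [edgesIn, Finset.mem_filter] at he; exact he.2)⟩

/-- The block `B` induces a connected subgraph of `G`. -/
def BlockConnected (G : VGraph V E) (B : Finset V) : Prop :=
  ∀ u ∈ B, ∀ v ∈ B, Relation.EqvGen (G.adjRel (G.edgesIn B)) u v

/-- A connected partition of `V(G)`: every vertex lies in exactly one block,
blocks are nonempty, and each block induces a connected subgraph. -/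
def IsConnectedPartition (G : VGraph V E) (P : Finset (Finset V)) : Prop :=
  (∀ B ∈ P, B.Nonempty) ∧ (∀ v : V, ∃! B, B ∈ P ∧ v ∈ B) ∧ ∀ B ∈ P, G.BlockConnected B

/-- The partition `Π(A)` of `V(G)` into the components of `(V, A)`. -/
noncomputable def partitionOf (G : VGraph V E) (A : Finset E) : Finset (Finset V) :=
  Finset.univ.image fun c : G.Comp A => G.compVerts A c

/-- The internally inactive edges of the spanning tree `T`. -/
noncomputable def intInactives [LinearOrder E] (G : VGraph V E) (T : Finset E) : Finset E :=
  T.filter fun e => ¬ G.IntActive T e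

/-- The internally active edges of the spanning tree `T`. -/
noncomputable def intActives [LinearOrder E] (G : VGraph V E) (T : Finset E) : Finset E :=
  T.filter fun e => G.IntActive T e

/-- The externally active edges w.r.t. the spanning tree / forest `T`. -/
noncomputable def extActives [LinearOrder E] (G : VGraph V E) (T : Finset E) : Finset E :=
  Finset.univ.filter fun e => G.ExtActive T e

/-- Kronecker delta `δ(σ_i, σ_j)` for the two ends of the edge `e`. -/
noncomputable def edgeDelta (G : VGraph V E) {q : ℕ} (σ : V → Fin q) (e : E) : ℂ :=
  Sym2.lift ⟨fun u v => if σ u = σ v then 1 else 0, fun u v => by simp [eq_comm]⟩ (G.ends e)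

/-- The Potts partition function with variable interactions `J` and
field vectors `M`. -/
noncomputable def Zext (G : VGraph V E) (q : ℕ) (β : ℂ) (J : E → ℂ) (M : V → Fin q → ℂ) : ℂ :=
  ∑ σ : V → Fin q, Complex.exp (β * ((∑ e : E, J e * G.edgeDelta σ e) +
    ∑ v : V, ∑ α : Fin q, M v α * (if α = σ v then 1 else 0)))

/-- The Potts partition function with constant interaction `J` and constant
field `H` favouring the first spin. -/
noncomputable def ZconstField (G : VGraph V E) (q : ℕ) (β J H : ℂ) : ℂ :=
  ∑ σ : V → Fin q, Complex.exp (β * (J * (∑ e : E, G.edgeDelta σ e) +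
    H * ∑ v : V, (if (σ v : ℕ) = 0 then (1 : ℂ) else 0)))

/-- The zero-field Potts partition function with constant interaction `J`. -/
noncomputable def Zzero (G : VGraph V E) (q : ℕ) (β J : ℂ) : ℂ :=
  ∑ σ : V → Fin q, Complex.exp (β * J * ∑ e : E, G.edgeDelta σ e)

end VGraph

/-!
Split the state sum according to whether the state `A` contains `e`. The states avoiding `e` are
exactly the states of `G − e`, with the same components. For `A = B ∪ {e}`, the components of
`(V, A)` are the preimages of the components of `(V(G/e), B)` under the quotient map
`V → V(G/e)`, so each component weight of `A` is the corresponding component weight of `B` in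
`G/e` for the merged vertex weights; the factor `γ_e` splits off the edge product.
-/

open Function

theorem sum_univ_finset_eq_sum_subtype_ne_add_insert {E M : Type*} [Fintype E]
    [AddCommMonoid M] (e : E) (F : Finset E → M) :
    ∑ A, F A = ∑ B : Finset {f // f ≠ e}, F (B.map (Embedding.subtype _)) +
      ∑ B : Finset {f // f ≠ e}, F (insert e (B.map (Embedding.subtype _))) := by
  have hpow : (univ.erase e).powerset =
      (univ : Finset (Finset {f // f ≠ e})).map
        (mapEmbedding (Embedding.subtype _)).toEmbedding := by
    ext A
    rw [← filter_ne', ← univ_map_subtype, mem_powerset, subset_map_iff]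
    simp [eq_comm]
  rw [← powerset_univ, ← insert_erase (mem_univ e), sum_powerset_insert (notMem_erase e _), hpow,
    sum_map, sum_map]
  rfl

section ClassWeight

variable {α β S R : Type*} [Fintype α] [AddCommMonoid S] [CommSemiring R]

noncomputable def classWeight (r : Setoid α) (ω : α → S) (c : Quotient r) : S :=
  ∑ a with Quotient.mk r a = c, ω a

noncomputable def classMonomial (r : Setoid α) (ω : α → S) : MvPolynomial S R :=
  ∏ c : Quotient r, MvPolynomial.X (classWeight r ω c)

theorem classWeight_comap [Fintype β] [DecidableEq β] (f : α → β) (s : Setoid β) (ω : α → S)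
    (a : α) :
    classWeight (s.comap f) ω (Quotient.mk _ a) =
      classWeight s (fun b => ∑ a' with f a' = b, ω a') (Quotient.mk _ (f a)) := by
  rw [classWeight, classWeight, sum_fiberwise_eq_sum_filter]
  refine sum_congr (filter_congr fun a' _ => ?_) fun _ _ => rfl
  simp only [Quotient.eq, mem_filter, mem_univ, true_and, Setoid.comap_rel]

theorem classMonomial_comap [Fintype β] [DecidableEq β] {f : α → β} (hf : Surjective f)
    (s : Setoid β) (ω : α → S) :
    (classMonomial (s.comap f) ω : MvPolynomial S R) =
      classMonomial s (fun b => ∑ a with f a = b, ω a) := by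
  refine Fintype.prod_bijective (Quotient.map' f fun _ _ => id) ⟨?_, ?_⟩ _ _ ?_
  · exact Quotient.ind₂ fun a a' h => Quotient.sound (Quotient.exact h :)
  · exact (Quotient.mk_surjective.comp hf).forall.2 fun a => ⟨Quotient.mk _ a, rfl⟩
  · exact Quotient.ind fun a => by rw [classWeight_comap]; rfl

theorem classMonomial_comap_mk (t : Setoid α) (s : Setoid (Quotient t)) (ω : α → S) :
    (classMonomial (s.comap (Quotient.mk t)) ω : MvPolynomial S R) =
      classMonomial s (classWeight t ω) :=
  classMonomial_comap Quotient.mk_surjective s ω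

end ClassWeight

namespace VGraph

variable {V E S R : Type}

theorem compWeight_eq_classWeight [Fintype V] [AddCommMonoid S] (G : VGraph V E)
    (A : Finset E) (ω : V → S) :
    G.compWeight A ω = classWeight (G.compSetoid A) ω := by
  funext c
  unfold compWeight compVerts classWeight
  -- the two filters carry different `Decidable` instances
  congr!

theorem Vpoly_eq_sum_classMonomial [Fintype V] [Fintype E] [AddCommMonoid S] [CommRing R]
    (G : VGraph V E) (ω : V → S) (γ : E → R) :
    G.Vpoly ω γ = ∑ A, classMonomial (G.compSetoid A) ω * MvPolynomial.C (∏ e ∈ A, γ e) := by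
  simp only [Vpoly, compWeight_eq_classWeight]
  rfl

theorem compSetoid_map_subtype (G : VGraph V E) (e : E) (B : Finset {f // f ≠ e}) :
    G.compSetoid (B.map (Embedding.subtype _)) = (G.del e).compSetoid B := by
  have : G.adjRel (B.map (Embedding.subtype _)) = (G.del e).adjRel B := by
    ext u v
    simp [adjRel, del]
  simp only [compSetoid, this]

theorem compSetoid_mono (G : VGraph V E) {A A' : Finset E} (h : A ⊆ A') :
    G.compSetoid A ≤ G.compSetoid A' :=
  Setoid.eqvGen_mono fun _ _ ⟨f, hf, huv⟩ => ⟨f, h hf, huv⟩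

theorem compSetoid_insert_le_comap (G : VGraph V E) (e : E) (B : Finset {f // f ≠ e}) :
    G.compSetoid (insert e (B.map (Embedding.subtype _))) ≤
      ((G.contract e).compSetoid B).comap (Quotient.mk (G.compSetoid {e})) := by
  refine Setoid.eqvGen_le fun u v ⟨f, hf, huv⟩ => ?_
  rcases mem_insert.1 hf with rfl | hf
  · have hfuv : Quotient.mk (G.compSetoid {f}) u = Quotient.mk _ v :=
      Quotient.sound (Relation.EqvGen.rel _ _ ⟨f, mem_singleton_self f, huv⟩)
    show (G.contract f).compSetoid B (Quotient.mk (G.compSetoid {f}) u)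
      (Quotient.mk (G.compSetoid {f}) v)
    rw [hfuv]
    exact Setoid.refl' _ _
  · obtain ⟨g, hg, rfl⟩ := mem_map.1 hf
    refine Relation.EqvGen.rel _ _ ⟨g, hg, ?_⟩
    show (G.ends g).map _ = _
    rw [show G.ends g = s(u, v) from huv]
    rfl

theorem contract_compSetoid_le_map (G : VGraph V E) (e : E) (B : Finset {f // f ≠ e}) :
    (G.contract e).compSetoid B ≤
      (G.compSetoid (insert e (B.map (Embedding.subtype _)))).map (Quotient.mk _) := by
  refine Setoid.eqvGen_le fun x y ⟨g, hg, hxy⟩ => ?_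
  obtain ⟨⟨a, b⟩, hab⟩ := Quot.exists_rep (G.ends g)
  have hedge : G.compSetoid (insert e (B.map (Embedding.subtype _))) a b :=
    Relation.EqvGen.rel _ _ ⟨g, mem_insert_of_mem (mem_map_of_mem _ hg), hab.symm⟩
  have hxy : s(Quotient.mk (G.compSetoid {e}) a, Quotient.mk _ b) = s(x, y) := by
    rw [← hxy]
    show _ = (G.ends g).map _
    rw [← hab]
    rfl
  rcases Sym2.eq_iff.1 hxy with ⟨rfl, rfl⟩ | ⟨rfl, rfl⟩
  · exact Relation.EqvGen.rel _ _ ⟨a, b, hedge, rfl, rfl⟩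
  · exact Relation.EqvGen.rel _ _ ⟨b, a, Setoid.symm' _ hedge, rfl, rfl⟩

theorem compSetoid_insert_map_subtype (G : VGraph V E) (e : E) (B : Finset {f // f ≠ e}) :
    G.compSetoid (insert e (B.map (Embedding.subtype _))) =
      ((G.contract e).compSetoid B).comap (Quotient.mk (G.compSetoid {e})) := by
  have hker : Setoid.ker (Quotient.mk (G.compSetoid {e})) ≤
      G.compSetoid (insert e (B.map (Embedding.subtype _))) := fun u v h =>
    G.compSetoid_mono (singleton_subset_iff.2 (mem_insert_self e _)) (Quotient.exact h)
  refine le_antisymm (G.compSetoid_insert_le_comap e B) fun u v h => ?_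
  rw [← Setoid.comap_map_of_ker_le _ _ hker]
  exact G.contract_compSetoid_le_map e B h

theorem classMonomial_compSetoid_insert [Fintype V] [AddCommMonoid S] [CommSemiring R]
    (G : VGraph V E) (e : E) (B : Finset {f // f ≠ e}) (ω : V → S) :
    (classMonomial (G.compSetoid (insert e (B.map (Embedding.subtype _)))) ω :
      MvPolynomial S R) =
      classMonomial ((G.contract e).compSetoid B) (G.compWeight {e} ω) := by
  rw [compSetoid_insert_map_subtype, compWeight_eq_classWeight]
  exact classMonomial_comap_mk _ _ _

end VGraph

theorem Vpoly_deletion_contraction_general {V E S R : Type} [Fintype V] [Fintype E]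
    [AddCommMonoid S] [CommRing R] (G : VGraph V E) (ω : V → S) (γ : E → R)
    (e : E) :
    G.Vpoly ω γ =
      (G.del e).Vpoly ω (fun f => γ f.1) +
        MvPolynomial.C (γ e) * (G.contract e).Vpoly (G.compWeight {e} ω) (fun f => γ f.1) := by
  simp only [VGraph.Vpoly_eq_sum_classMonomial]
  rw [sum_univ_finset_eq_sum_subtype_ne_add_insert e, mul_sum]
  congr 1
  · refine sum_congr rfl fun B _ => ?_
    rw [VGraph.compSetoid_map_subtype, prod_map]
    rfl
  · refine sum_congr rfl fun B _ => ?_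
    rw [VGraph.classMonomial_compSetoid_insert, prod_insert (by simp), prod_map,
      MvPolynomial.C_mul]
    simp only [Embedding.subtype_apply]
    ring

/-- Deletion–contraction for the V-polynomial at a non-loop edge:
`V(G) = V(G − e) + γ_e · V(G/e)`, where in `G/e` the merged vertex receives the sum
of the weights of the endpoints of `e`. -/
theorem Vpoly_deletion_contraction {V E S R : Type} [Fintype V] [Fintype E]
    [AddCommMonoid S] [CommRing R] (G : VGraph V E) (ω : V → S) (γ : E → R)
    (e : E) (he : ¬ G.IsLoop e) :
    G.Vpoly ω γ =
      (G.del e).Vpoly ω (fun f => γ f.1) +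
        MvPolynomial.C (γ e) * (G.contract e).Vpoly (G.compWeight {e} ω) (fun f => γ f.1) :=
  Vpoly_deletion_contraction_general G ω γ e
end

section
/- Let G be a finite graph with linearly ordered edges and edge weights γ_e in a commutative ring, and let θ be another variable. Then the multivariate Tutte polynomial admits Traldi's spanning tree expansion: Z_T(G; θ, γ) = θ^{k(G)} · Σ_{T ∈ T(G)} (∏_{e internally inactive w.r.t. T} γ_e) · (∏_{e internally active w.r.t. T} (γ_e + θ)) · (∏_{e externally active w.r.t. T} (γ_e + 1)), where T(G) is the set of maximal spanning forests of G (spanning trees on each component). -/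
open scoped Classical
open Finset

structure MGraph (V E : Type) where
  ends : E → Sym2 V

namespace MGraph

variable {V E S R : Type} [Fintype V] [Fintype E]

/-- Two vertices are joined by an edge of `A`. -/
def adjRel (G : MGraph V E) (A : Finset E) (u v : V) : Prop :=
  ∃ e ∈ A, G.ends e = s(u, v)

/-- The setoid on vertices whose classes are the connected components of the
spanning subgraph `(V, A)`. -/
def compSetoid (G : MGraph V E) (A : Finset E) : Setoid V :=
  ⟨Relation.EqvGen (G.adjRel A), Relation.EqvGen.is_equivalence _⟩

/-- The connected components of the spanning subgraph `(V, A)`. -/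
def Comp (G : MGraph V E) (A : Finset E) : Type := Quotient (G.compSetoid A)

noncomputable instance (G : MGraph V E) (A : Finset E) : Fintype (G.Comp A) :=
  @Quotient.fintype V _ (G.compSetoid A) (Classical.decRel _)

/-- `k(A)`: the number of connected components of the spanning subgraph `(V, A)`. -/
noncomputable def kA (G : MGraph V E) (A : Finset E) : ℕ := Nat.card (G.Comp A)

/-- `u` and `v` are connected in the spanning subgraph `(V, A)`. -/
def Connects (G : MGraph V E) (A : Finset E) (u v : V) : Prop :=
  Relation.EqvGen (G.adjRel A) u v

/-- The endpoints of `e` are connected in the spanning subgraph `(V, A)`. -/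
def EndsConnected (G : MGraph V E) (A : Finset E) (e : E) : Prop :=
  ∃ u v, G.ends e = s(u, v) ∧ G.Connects A u v

def IsLoop (G : MGraph V E) (e : E) : Prop := (G.ends e).IsDiag

/-- `(V, A)` is a forest (acyclic spanning subgraph): every edge of `A` is a bridge of it. -/
def IsForest (G : MGraph V E) (A : Finset E) : Prop :=
  ∀ e ∈ A, ¬ G.EndsConnected (A.erase e) e

/-- All vertices are pairwise connected using edges of `A`. -/
def ConnectsAll (G : MGraph V E) (A : Finset E) : Prop := ∀ u v, G.Connects A u v

/-- A maximal spanning forest: a forest restricting to a spanning tree of each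
connected component of `G`. -/
def IsSpanningTree (G : MGraph V E) (T : Finset E) : Prop :=
  G.IsForest T ∧ ∀ u v, G.Connects T u v ↔ G.Connects Finset.univ u v

/-- `e ∈ T` is internally active: `e` is minimal in the cut
`{f : (T - e) ∪ {f} ∈ 𝒯(G)}`. -/
def IntActive [LinearOrder E] (G : MGraph V E) (T : Finset E) (e : E) : Prop :=
  e ∈ T ∧ ∀ f, G.IsSpanningTree (insert f (T.erase e)) → e ≤ f

/-- The edge set of the unique cycle of `T ∪ {e}` (when it exists):
`e` together with those `f ∈ T` whose removal disconnects the ends of `e`. -/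
noncomputable def cycleEdges (G : MGraph V E) (T : Finset E) (e : E) : Finset E :=
  insert e (T.filter fun f => ¬ G.EndsConnected (T.erase f) e)

/-- `e ∉ T` is externally active: `T ∪ {e}` contains a cycle through `e` and
`e` is the minimal edge of that cycle. -/
def ExtActive [LinearOrder E] (G : MGraph V E) (T : Finset E) (e : E) : Prop :=
  e ∉ T ∧ G.EndsConnected T e ∧ ∀ f ∈ G.cycleEdges T e, e ≤ f

/-- The vertex set of the component `c` of `(V, A)`. -/
noncomputable def compVerts (G : MGraph V E) (A : Finset E) (c : G.Comp A) : Finset V :=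
  Finset.univ.filter fun v => (Quotient.mk (G.compSetoid A) v) = c

/-- The total vertex weight of the component `c` of `(V, A)`. -/
noncomputable def compWeight [AddCommMonoid S] (G : MGraph V E) (A : Finset E)
    (ω : V → S) (c : G.Comp A) : S :=
  ∑ v ∈ G.compVerts A c, ω v

/-- The V-polynomial, defined by its state sum. -/
noncomputable def Vpoly [AddCommMonoid S] [CommRing R] (G : MGraph V E)
    (ω : V → S) (γ : E → R) : MvPolynomial S R :=
  ∑ A : Finset E, (∏ c : G.Comp A, MvPolynomial.X (G.compWeight A ω c)) *
    MvPolynomial.C (∏ e ∈ A, γ e)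

/-- The multivariate Tutte polynomial `Z_T(G; q, γ)` as a polynomial in `q`. -/
noncomputable def ZT [CommRing R] (G : MGraph V E) (γ : E → R) : Polynomial R :=
  ∑ A : Finset E, Polynomial.X ^ (G.kA A) * Polynomial.C (∏ e ∈ A, γ e)

/-- Deletion of the edge `e`. -/
def del (G : MGraph V E) (e : E) : MGraph V {f : E // f ≠ e} := ⟨fun f => G.ends f.1⟩

/-- Contraction of the edge `e`: vertices are the components of `(V, {e})`. -/
noncomputable def contract (G : MGraph V E) (e : E) : MGraph (G.Comp {e}) {f : E // f ≠ e} :=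
  ⟨fun f => (G.ends f.1).map (Quotient.mk (G.compSetoid {e}))⟩

/-- The forest `T` with the edges of `B` contracted: vertices are the components
of `(V, B)` and edges are `T \ B`. -/
noncomputable def contractIn (G : MGraph V E) (T B : Finset E) :
    MGraph (G.Comp B) ↥(T \ B : Finset E) :=
  ⟨fun f => (G.ends f.1).map (Quotient.mk (G.compSetoid B))⟩

/-- The edges of `G` with both ends inside `P`. -/
noncomputable def edgesIn (G : MGraph V E) (P : Finset V) : Finset E :=
  Finset.univ.filter fun e => ∀ v ∈ G.ends e, v ∈ P

/-- The subgraph of `G` induced by the vertex set `P`. -/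
noncomputable def induce (G : MGraph V E) (P : Finset V) : MGraph ↥P ↥(G.edgesIn P) :=
  ⟨fun e => (G.ends e.1).pmap (fun v hv => (⟨v, hv⟩ : ↥P))
    (by have he := e.2; simp only [edgesIn, Finset.mem_filter] at he; exact he.2)⟩

/-- The block `B` induces a connected subgraph of `G`. -/
def BlockConnected (G : MGraph V E) (B : Finset V) : Prop :=
  ∀ u ∈ B, ∀ v ∈ B, Relation.EqvGen (G.adjRel (G.edgesIn B)) u v

/-- A connected partition of `V(G)`: every vertex lies in exactly one block,
blocks are nonempty, and each block induces a connected subgraph. -/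
def IsConnectedPartition (G : MGraph V E) (P : Finset (Finset V)) : Prop :=
  (∀ B ∈ P, B.Nonempty) ∧ (∀ v : V, ∃! B, B ∈ P ∧ v ∈ B) ∧ ∀ B ∈ P, G.BlockConnected B

/-- The partition `Π(A)` of `V(G)` into the components of `(V, A)`. -/
noncomputable def partitionOf (G : MGraph V E) (A : Finset E) : Finset (Finset V) :=
  Finset.univ.image fun c : G.Comp A => G.compVerts A c

/-- The internally inactive edges of the spanning tree `T`. -/
noncomputable def intInactives [LinearOrder E] (G : MGraph V E) (T : Finset E) : Finset E :=
  T.filter fun e => ¬ G.IntActive T e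

/-- The internally active edges of the spanning tree `T`. -/
noncomputable def intActives [LinearOrder E] (G : MGraph V E) (T : Finset E) : Finset E :=
  T.filter fun e => G.IntActive T e

/-- The externally active edges w.r.t. the spanning tree / forest `T`. -/
noncomputable def extActives [LinearOrder E] (G : MGraph V E) (T : Finset E) : Finset E :=
  Finset.univ.filter fun e => G.ExtActive T e

/-- Kronecker delta `δ(σ_i, σ_j)` for the two ends of the edge `e`. -/
noncomputable def edgeDelta (G : MGraph V E) {q : ℕ} (σ : V → Fin q) (e : E) : ℂ :=
  Sym2.lift ⟨fun u v => if σ u = σ v then 1 else 0, fun u v => by simp [eq_comm]⟩ (G.ends e)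

/-- The Potts partition function with variable interactions `J` and
field vectors `M`. -/
noncomputable def Zext (G : MGraph V E) (q : ℕ) (β : ℂ) (J : E → ℂ) (M : V → Fin q → ℂ) : ℂ :=
  ∑ σ : V → Fin q, Complex.exp (β * ((∑ e : E, J e * G.edgeDelta σ e) +
    ∑ v : V, ∑ α : Fin q, M v α * (if α = σ v then 1 else 0)))

/-- The Potts partition function with constant interaction `J` and constant
field `H` favouring the first spin. -/
noncomputable def ZconstField (G : MGraph V E) (q : ℕ) (β J H : ℂ) : ℂ :=
  ∑ σ : V → Fin q, Complex.exp (β * (J * (∑ e : E, G.edgeDelta σ e) +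
    H * ∑ v : V, (if (σ v : ℕ) = 0 then (1 : ℂ) else 0)))

/-- The zero-field Potts partition function with constant interaction `J`. -/
noncomputable def Zzero (G : MGraph V E) (q : ℕ) (β J : ℂ) : ℂ :=
  ∑ σ : V → Fin q, Complex.exp (β * J * ∑ e : E, G.edgeDelta σ e)

end MGraph

/-!
Traldi's order attached to an edge set `A` (the edges of `A` first, largest first, then the
others, smallest first) makes Kruskal's greedy algorithm produce a maximal spanning forest `T_A`.
Comparing the greedy choices with the activities shows that `T_A = T` exactly when the edges of
`T \ A` are internally active and those of `A \ T` externally active, so the subsets of `E` are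
partitioned into the Boolean intervals `[T \ IA(T), T ∪ EA(T)]` (Crapo). As `A` is up-closed for
its own order, `T_A ∩ A` spans `A`, whence `k(A) = k(G) + |T \ A|`. Summing `θ^k(A) γ^A` over
one interval therefore factors as `θ^k(G) ∏_{II} γ_e ∏_{IA} (γ_e + θ) ∏_{EA} (γ_e + 1)`.
-/

namespace MGraph

section Connectivity

variable {V E : Type} {G : MGraph V E} {A B F T : Finset E} {e f : E} {u v w x y : V}

theorem connects_refl (u : V) : G.Connects A u u := Relation.EqvGen.refl u

theorem Connects.symm (h : G.Connects A u v) : G.Connects A v u := Relation.EqvGen.symm _ _ h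

theorem Connects.trans (h : G.Connects A u v) (h' : G.Connects A v w) : G.Connects A u w :=
  Relation.EqvGen.trans _ _ _ h h'

theorem connects_of_mem (he : e ∈ A) (hxy : G.ends e = s(x, y)) : G.Connects A x y :=
  Relation.EqvGen.rel _ _ ⟨e, he, hxy⟩

theorem Connects.mono (hAB : A ⊆ B) (h : G.Connects A u v) : G.Connects B u v :=
  Relation.EqvGen.mono (fun _ _ ⟨e, he, hxy⟩ => ⟨e, hAB he, hxy⟩) _ _ h

theorem eq_of_connects_empty (h : G.Connects ∅ u v) : u = v := by
  induction h with
  | rel _ _ h => exact absurd h.choose_spec.1 (notMem_empty _)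
  | refl => rfl
  | symm _ _ _ ih => exact ih.symm
  | trans _ _ _ _ _ ih₁ ih₂ => exact ih₁.trans ih₂

theorem exists_ends_eq (G : MGraph V E) (e : E) : ∃ x y, G.ends e = s(x, y) := by
  obtain ⟨⟨x, y⟩, h⟩ := Quot.exists_rep (G.ends e)
  exact ⟨x, y, h.symm⟩

theorem endsConnected_iff (hxy : G.ends e = s(x, y)) :
    G.EndsConnected A e ↔ G.Connects A x y := by
  refine ⟨fun ⟨u, v, huv, hc⟩ => ?_, fun hc => ⟨x, y, hxy, hc⟩⟩
  rcases Sym2.eq_iff.mp (huv.symm.trans hxy) with ⟨rfl, rfl⟩ | ⟨rfl, rfl⟩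
  exacts [hc, hc.symm]

theorem EndsConnected.mono (hAB : A ⊆ B) (h : G.EndsConnected A e) : G.EndsConnected B e :=
  let ⟨u, v, huv, hc⟩ := h; ⟨u, v, huv, hc.mono hAB⟩

theorem endsConnected_of_mem (he : e ∈ A) : G.EndsConnected A e :=
  let ⟨x, y, hxy⟩ := G.exists_ends_eq e; ⟨x, y, hxy, connects_of_mem he hxy⟩

theorem Connects.of_forall_endsConnected (h : ∀ f ∈ A, G.EndsConnected B f)
    (huv : G.Connects A u v) : G.Connects B u v :=
  Setoid.eqvGen_le (s := G.compSetoid B)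
    (fun _ _ ⟨f, hf, hxy⟩ => (endsConnected_iff hxy).mp (h f hf)) huv

theorem EndsConnected.of_forall_endsConnected (h : ∀ f ∈ A, G.EndsConnected B f)
    (he : G.EndsConnected A e) : G.EndsConnected B e :=
  let ⟨u, v, huv, hc⟩ := he; ⟨u, v, huv, hc.of_forall_endsConnected h⟩

theorem connects_insert_iff_of_endsConnected (he : G.EndsConnected A e) :
    G.Connects (insert e A) u v ↔ G.Connects A u v := by
  refine ⟨Connects.of_forall_endsConnected fun f hf => ?_, Connects.mono (subset_insert e A)⟩
  rcases mem_insert.mp hf with rfl | hf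
  exacts [he, endsConnected_of_mem hf]

theorem connects_insert_iff (hxy : G.ends e = s(x, y)) :
    G.Connects (insert e A) u v ↔ G.Connects A u v ∨
      (G.Connects A u x ∧ G.Connects A y v) ∨ (G.Connects A u y ∧ G.Connects A x v) := by
  refine ⟨fun h => ?_, ?_⟩
  · induction h with
    | rel a b hab =>
      obtain ⟨f, hf, hfab⟩ := hab
      rcases mem_insert.mp hf with rfl | hf
      · rcases Sym2.eq_iff.mp (hfab.symm.trans hxy) with ⟨rfl, rfl⟩ | ⟨rfl, rfl⟩
        · exact Or.inr (Or.inl ⟨connects_refl _, connects_refl _⟩)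
        · exact Or.inr (Or.inr ⟨connects_refl _, connects_refl _⟩)
      · exact Or.inl (connects_of_mem hf hfab)
    | refl a => exact Or.inl (connects_refl a)
    | symm a b _ ih =>
      rcases ih with h | ⟨h₁, h₂⟩ | ⟨h₁, h₂⟩
      · exact Or.inl h.symm
      · exact Or.inr (Or.inr ⟨h₂.symm, h₁.symm⟩)
      · exact Or.inr (Or.inl ⟨h₂.symm, h₁.symm⟩)
    | trans a b c _ _ ih₁ ih₂ =>
      rcases ih₁ with h | ⟨h₁, h₂⟩ | ⟨h₁, h₂⟩ <;>
        rcases ih₂ with h' | ⟨h₁', h₂'⟩ | ⟨h₁', h₂'⟩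
      · exact Or.inl (h.trans h')
      · exact Or.inr (Or.inl ⟨h.trans h₁', h₂'⟩)
      · exact Or.inr (Or.inr ⟨h.trans h₁', h₂'⟩)
      · exact Or.inr (Or.inl ⟨h₁, h₂.trans h'⟩)
      · exact Or.inr (Or.inl ⟨h₁, h₂'⟩)
      · exact Or.inl (h₁.trans h₂')
      · exact Or.inr (Or.inr ⟨h₁, h₂.trans h'⟩)
      · exact Or.inl (h₁.trans h₂')
      · exact Or.inr (Or.inr ⟨h₁, h₂'⟩)
  · have hA : ∀ {a b}, G.Connects A a b → G.Connects (insert e A) a b :=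
      Connects.mono (subset_insert e A)
    have hexy : G.Connects (insert e A) x y := connects_of_mem (mem_insert_self e A) hxy
    rintro (h | ⟨h₁, h₂⟩ | ⟨h₁, h₂⟩)
    · exact hA h
    · exact ((hA h₁).trans hexy).trans (hA h₂)
    · exact ((hA h₁).trans hexy.symm).trans (hA h₂)

/-- For a maximal spanning forest `T`, `t ∈ T` and `s ∉ T`: `t` lies on the fundamental cycle
of `s`, equivalently `s` crosses the fundamental cut of `t`. -/
def Separates (G : MGraph V E) (T : Finset E) (t s : E) : Prop :=
  ¬ G.EndsConnected (T.erase t) s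

theorem Separates.notMem (h : G.Separates T e f) (hef : e ≠ f) : f ∉ T :=
  fun hf => h (endsConnected_of_mem (mem_erase.mpr ⟨hef.symm, hf⟩))

theorem IsForest.subset (hAB : A ⊆ B) (hB : G.IsForest B) : G.IsForest A := fun e he hc =>
  hB e (hAB he) (hc.mono (erase_subset_erase _ hAB))

theorem IsForest.insert (hF : G.IsForest F) (he : ¬ G.EndsConnected F e) :
    G.IsForest (insert e F) := by
  have heF : e ∉ F := fun h => he (endsConnected_of_mem h)
  intro g hg hc
  rcases mem_insert.mp hg with rfl | hgF
  · rw [erase_insert heF] at hc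
    exact he hc
  · have hge : e ≠ g := by rintro rfl; exact heF hgF
    rw [erase_insert_of_ne hge] at hc
    obtain ⟨a, b, hab, hcon⟩ := hc
    obtain ⟨x, y, hxy⟩ := G.exists_ends_eq e
    have hF' : ∀ {c d}, G.Connects (F.erase g) c d → G.Connects F c d :=
      Connects.mono (erase_subset g F)
    have hgab : G.Connects F a b := connects_of_mem hgF hab
    rcases (connects_insert_iff hxy).mp hcon with h | ⟨h₁, h₂⟩ | ⟨h₁, h₂⟩
    · exact hF g hgF ⟨a, b, hab, h⟩
    · exact he ⟨x, y, hxy, ((hF' h₁).symm.trans hgab).trans (hF' h₂).symm⟩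
    · exact he ⟨x, y, hxy, ((hF' h₂).trans hgab.symm).trans (hF' h₁)⟩

theorem kA_congr (h : ∀ u v, G.Connects A u v ↔ G.Connects B u v) : G.kA A = G.kA B := by
  unfold kA Comp
  rw [show G.compSetoid A = G.compSetoid B from Setoid.ext h]

end Connectivity

section Components

variable {V E : Type} [Fintype V] {G : MGraph V E} {A B F : Finset E} {e : E}

theorem kA_empty : G.kA ∅ = Fintype.card V := by
  have : Function.Bijective (Quotient.mk (G.compSetoid ∅)) :=
    ⟨fun _ _ h => eq_of_connects_empty (Quotient.exact h), Quot.exists_rep⟩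
  rw [kA, ← Nat.card_eq_fintype_card]
  exact (Nat.card_eq_of_bijective _ this).symm

/-- The map induced on components is a bijection once the component of the end `y` of `e` is
removed from its domain. -/
theorem kA_insert_add_one (he : ¬ G.EndsConnected A e) :
    G.kA (insert e A) + 1 = G.kA A := by
  obtain ⟨x, y, hxy⟩ := G.exists_ends_eq e
  have hxy' : ¬ G.Connects A x y := fun h => he ⟨x, y, hxy, h⟩
  let cy : G.Comp A := Quotient.mk _ y
  let φ : {c : G.Comp A // c ≠ cy} → G.Comp (insert e A) :=
    fun c => Quotient.map id (fun _ _ => Connects.mono (subset_insert e A)) c.1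
  have hφ : Function.Bijective φ := by
    constructor
    · rintro ⟨c, hc⟩ ⟨d, hd⟩ h
      induction c using Quotient.inductionOn with | h z => ?_
      induction d using Quotient.inductionOn with | h w => ?_
      have hzy : ¬ G.Connects A z y := fun h => hc (Quotient.sound h)
      have hwy : ¬ G.Connects A w y := fun h => hd (Quotient.sound h)
      refine Subtype.ext (Quotient.sound ?_)
      rcases (connects_insert_iff hxy).mp (Quotient.exact h) with h | ⟨-, h⟩ | ⟨h, -⟩
      exacts [h, absurd h.symm hwy, absurd h hzy]
    · intro c
      induction c using Quotient.inductionOn with | h w => ?_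
      by_cases hw : G.Connects A w y
      · refine ⟨⟨Quotient.mk _ x, fun h => hxy' (Quotient.exact h)⟩, Quotient.sound ?_⟩
        exact (connects_of_mem (mem_insert_self e A) hxy).trans (hw.symm.mono (subset_insert e A))
      · exact ⟨⟨Quotient.mk _ w, fun h => hw (Quotient.exact h)⟩, rfl⟩
  have hcard := Nat.card_eq_of_bijective φ hφ
  rw [Nat.card_eq_fintype_card, Fintype.card_subtype_compl, Fintype.card_subtype_eq] at hcard
  have hpos : 0 < Fintype.card (G.Comp A) := Fintype.card_pos_iff.mpr ⟨cy⟩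
  rw [kA, kA, ← hcard, Nat.card_eq_fintype_card]
  omega

theorem IsForest.kA_add_card (hF : G.IsForest F) : G.kA F + #F = Fintype.card V := by
  induction F using Finset.induction_on with
  | empty => simp [kA_empty]
  | insert e F heF ih =>
    have hbridge : ¬ G.EndsConnected F e := by
      simpa [erase_insert heF] using hF e (mem_insert_self e F)
    rw [card_insert_of_notMem heF, ← ih (hF.subset (subset_insert e F)),
      ← kA_insert_add_one hbridge]
    ring

end Components

section SpanningTrees

variable {V E : Type} [Fintype E] {G : MGraph V E} {T : Finset E} {e f : E}

theorem IsSpanningTree.endsConnected (hT : G.IsSpanningTree T) (e : E) :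
    G.EndsConnected T e :=
  let ⟨x, y, hxy⟩ := G.exists_ends_eq e
  ⟨x, y, hxy, (hT.2 x y).mpr (connects_of_mem (mem_univ e) hxy)⟩

theorem IsSpanningTree.kA_add_card [Fintype V] (hT : G.IsSpanningTree T) :
    G.kA univ + #T = Fintype.card V := by
  rw [← kA_congr hT.2, hT.1.kA_add_card]

theorem IsSpanningTree.isSpanningTree_insert_erase_iff (hT : G.IsSpanningTree T) (he : e ∈ T) :
    G.IsSpanningTree (insert f (T.erase e)) ↔ G.Separates T e f := by
  obtain ⟨x, y, hxy⟩ := G.exists_ends_eq e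
  have hTe : insert e (T.erase e) = T := insert_erase he
  refine ⟨fun h hf => ?_,
    fun hf => ⟨(hT.1.subset (erase_subset e T)).insert hf, fun u v => ?_⟩⟩
  · refine hT.1 e he ⟨x, y, hxy, ?_⟩
    rw [← connects_insert_iff_of_endsConnected hf, h.2]
    exact connects_of_mem (mem_univ e) hxy
  · refine ⟨Connects.mono (subset_univ _), fun huv => ?_⟩
    refine ((hT.2 u v).mpr huv).of_forall_endsConnected fun g hg => ?_
    by_cases hge : g = e
    · subst hge
      obtain ⟨a, b, hab⟩ := G.exists_ends_eq f
      have hab' : G.Connects (insert g (T.erase g)) a b := by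
        rw [hTe]; exact (endsConnected_iff hab).mp (hT.endsConnected f)
      have hf' : G.Connects (insert f (T.erase g)) a b :=
        connects_of_mem (mem_insert_self f _) hab
      have hT' : ∀ {c d}, G.Connects (T.erase g) c d → G.Connects (insert f (T.erase g)) c d :=
        Connects.mono (subset_insert f _)
      rcases (connects_insert_iff hxy).mp hab' with h | ⟨h₁, h₂⟩ | ⟨h₁, h₂⟩
      · exact absurd ⟨a, b, hab, h⟩ hf
      · exact ⟨x, y, hxy, ((hT' h₁).symm.trans hf').trans (hT' h₂).symm⟩
      · exact ⟨x, y, hxy, ((hT' h₂).trans hf'.symm).trans (hT' h₁)⟩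
    · exact endsConnected_of_mem (mem_insert_of_mem (mem_erase.mpr ⟨hge, hg⟩))

end SpanningTrees

section Greedy

variable {V E ι : Type} [Fintype E] [LinearOrder ι] {G : MGraph V E} {p : E → ι}
  {S T : Finset E} {e f : E}

noncomputable def edgesAbove (p : E → ι) (e : E) : Finset E := univ.filter fun f => p e < p f

/-- Kruskal's forest for the priority `p`, highest first. Testing an edge against all higher
edges rather than the kept ones gives the same forest, since the kept ones span them. -/
noncomputable def greedyForest (G : MGraph V E) (p : E → ι) : Finset E :=
  univ.filter fun e => ¬ G.EndsConnected (edgesAbove p e) e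

theorem mem_edgesAbove : f ∈ edgesAbove p e ↔ p e < p f := by simp [edgesAbove]

theorem mem_greedyForest : e ∈ G.greedyForest p ↔ ¬ G.EndsConnected (edgesAbove p e) e := by
  simp [greedyForest]

theorem notMem_greedyForest : e ∉ G.greedyForest p ↔ G.EndsConnected (edgesAbove p e) e :=
  mem_greedyForest.not_left

def IsUpClosed (p : E → ι) (S : Finset E) : Prop := ∀ e ∈ S, ∀ f, p e < p f → f ∈ S

theorem isUpClosed_edgesAbove : IsUpClosed p (edgesAbove p e) :=
  fun _ hf _ hfg => mem_edgesAbove.mpr ((mem_edgesAbove.mp hf).trans hfg)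

/-- For injective `p`, an up-closed set with minimum `e` is `insert e (edgesAbove p e)`. -/
theorem IsUpClosed.induction (hp : Function.Injective p) {P : Finset E → Prop} (empty : P ∅)
    (insert_min : ∀ e, P (edgesAbove p e) → P (insert e (edgesAbove p e)))
    (hS : IsUpClosed p S) : P S := by
  revert hS
  refine Finset.induction_on_min_value (motive := fun S => IsUpClosed p S → P S)
    p S (fun _ => empty) fun a s ha hmin ih hS => ?_
  have hs : s = edgesAbove p a := by
    ext f
    rw [mem_edgesAbove]
    refine ⟨fun hf => (hmin f hf).lt_of_ne fun h => ha (hp h ▸ hf), fun hf => ?_⟩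
    exact (mem_insert.mp (hS a (mem_insert_self a s) f hf)).resolve_left
      (by rintro rfl; exact lt_irrefl _ hf)
  subst hs
  exact insert_min a (ih isUpClosed_edgesAbove)

theorem isForest_greedyForest_inter (hp : Function.Injective p)
    (hS : IsUpClosed p S) : G.IsForest (G.greedyForest p ∩ S) := by
  refine IsUpClosed.induction (P := fun S => G.IsForest (G.greedyForest p ∩ S)) hp
    (by simp [IsForest]) (fun e ih => ?_) hS
  by_cases he : e ∈ G.greedyForest p
  · rw [inter_insert_of_mem he]
    exact ih.insert fun h => mem_greedyForest.mp he (h.mono inter_subset_right)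
  · rwa [inter_insert_of_notMem he]

theorem endsConnected_greedyForest_inter (hp : Function.Injective p)
    (hS : IsUpClosed p S) :
    ∀ f ∈ S, G.EndsConnected (G.greedyForest p ∩ S) f := by
  refine IsUpClosed.induction
    (P := fun S => ∀ f ∈ S, G.EndsConnected (G.greedyForest p ∩ S) f) hp (by simp)
    (fun e ih f hf => ?_) hS
  have hmono : G.greedyForest p ∩ edgesAbove p e ⊆
      G.greedyForest p ∩ insert e (edgesAbove p e) :=
    inter_subset_inter_left (subset_insert e _)
  rcases mem_insert.mp hf with rfl | hf
  · by_cases he : f ∈ G.greedyForest p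
    · exact endsConnected_of_mem (mem_inter.mpr ⟨he, mem_insert_self f _⟩)
    · exact ((notMem_greedyForest.mp he).of_forall_endsConnected ih).mono hmono
  · exact (ih f hf).mono hmono

theorem greedyForest_isSpanningTree (hp : Function.Injective p) :
    G.IsSpanningTree (G.greedyForest p) := by
  have hS : IsUpClosed p univ := fun _ _ f _ => mem_univ f
  refine ⟨by simpa using isForest_greedyForest_inter (G := G) hp hS, fun u v => ?_⟩
  refine ⟨Connects.mono (subset_univ _), Connects.of_forall_endsConnected fun f hf => ?_⟩
  simpa using endsConnected_greedyForest_inter (G := G) hp hS f hf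

/-- An up-closed `S` is spanned by its greedy part, a forest. -/
theorem IsUpClosed.kA_eq_kA_univ_add_card_sdiff [Fintype V] (hp : Function.Injective p)
    (hS : IsUpClosed p S) : G.kA S = G.kA univ + #(G.greedyForest p \ S) := by
  have hspan : G.kA S = G.kA (G.greedyForest p ∩ S) := kA_congr fun u v =>
    ⟨Connects.of_forall_endsConnected (endsConnected_greedyForest_inter hp hS),
      Connects.mono inter_subset_right⟩
  have h₁ := (isForest_greedyForest_inter (G := G) hp hS).kA_add_card
  have h₂ := (greedyForest_isSpanningTree (G := G) hp).kA_add_card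
  have h₃ := card_inter_add_card_sdiff (G.greedyForest p) S
  omega

theorem lt_of_separates_greedyForest (hp : Function.Injective p) (he : e ∉ G.greedyForest p)
    (h : G.Separates (G.greedyForest p) f e) : p e < p f := by
  by_contra hfe
  refine h (EndsConnected.mono (fun g hg => ?_) ((notMem_greedyForest.mp he).of_forall_endsConnected
    (endsConnected_greedyForest_inter hp isUpClosed_edgesAbove)))
  obtain ⟨hgF, hg⟩ := mem_inter.mp hg
  exact mem_erase.mpr ⟨by rintro rfl; exact hfe (mem_edgesAbove.mp hg), hgF⟩

theorem IsSpanningTree.eq_greedyForest [Fintype V] (hp : Function.Injective p)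
    (hT : G.IsSpanningTree T) (h : ∀ t ∈ T, ∀ s ∉ T, G.Separates T t s → p s < p t) :
    T = G.greedyForest p := by
  have hsub : T ⊆ G.greedyForest p := by
    intro e he
    refine mem_greedyForest.mpr fun hEC => ?_
    obtain ⟨f, hf, hsep⟩ : ∃ f ∈ edgesAbove p e, G.Separates T e f := by
      by_contra! hall
      exact hT.1 e he (hEC.of_forall_endsConnected fun f hf => not_not.mp (hall f hf))
    have hef := mem_edgesAbove.mp hf
    exact (h e he f (hsep.notMem (by rintro rfl; exact lt_irrefl _ hef)) hsep).asymm hef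
  refine eq_of_subset_of_card_le hsub (Nat.le_of_eq ?_)
  have h₁ := hT.kA_add_card
  have h₂ := (greedyForest_isSpanningTree (G := G) hp).kA_add_card
  omega

end Greedy

section TraldiOrder

variable {E : Type} [LinearOrder E] {A : Finset E} {e f : E}

/-- Traldi's order attached to `A`: the greedy scan takes the edges of `A` first, largest first,
then the others, smallest first. -/
def traldiKey (A : Finset E) (e : E) : Eᵒᵈ ⊕ₗ E :=
  if e ∈ A then toLex (.inr e) else toLex (.inl (OrderDual.toDual e))

theorem traldiKey_injective (A : Finset E) : Function.Injective (traldiKey A) := by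
  intro e f h
  unfold traldiKey at h
  split_ifs at h <;> simp at h <;> exact h

theorem traldiKey_lt_traldiKey :
    traldiKey A e < traldiKey A f ↔
      f ∈ A ∧ (e ∈ A → e < f) ∨ e ∉ A ∧ f ∉ A ∧ f < e := by
  unfold traldiKey
  split_ifs with he hf hf <;> simp [he, hf]

theorem isUpClosed_traldiKey : IsUpClosed (traldiKey A) A := fun e he f hef => by
  rw [traldiKey_lt_traldiKey] at hef
  exact hef.elim (·.1) fun h => absurd he h.1

end TraldiOrder

section TraldiTree

variable {V E : Type} [Fintype E] [LinearOrder E] {G : MGraph V E} {A T : Finset E} {e f : E}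

theorem IsSpanningTree.intActive_iff (hT : G.IsSpanningTree T) :
    G.IntActive T e ↔ e ∈ T ∧ ∀ f, G.Separates T e f → e ≤ f := by
  refine and_congr_right fun he => forall_congr' fun f => imp_congr_left ?_
  convert hT.isSpanningTree_insert_erase_iff he

theorem IsSpanningTree.extActive_iff (hT : G.IsSpanningTree T) :
    G.ExtActive T e ↔ e ∉ T ∧ ∀ f ∈ T, G.Separates T f e → e ≤ f := by
  simp [ExtActive, cycleEdges, Separates, hT.endsConnected]

noncomputable def traldiTree (G : MGraph V E) (A : Finset E) : Finset E :=
  G.greedyForest (traldiKey A)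

theorem traldiTree_isSpanningTree : G.IsSpanningTree (G.traldiTree A) :=
  greedyForest_isSpanningTree (traldiKey_injective A)

theorem sdiff_subset_intActives_traldiTree :
    G.traldiTree A \ A ⊆ G.intActives (G.traldiTree A) := by
  intro e he
  obtain ⟨heT, heA⟩ := mem_sdiff.mp he
  refine mem_filter.mpr
    ⟨heT, traldiTree_isSpanningTree.intActive_iff.mpr ⟨heT, fun f hf => ?_⟩⟩
  rcases eq_or_ne e f with rfl | hef
  · rfl
  · have hfe := lt_of_separates_greedyForest (traldiKey_injective A) (hf.notMem hef) hf
    rw [traldiKey_lt_traldiKey] at hfe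
    exact (hfe.resolve_left fun h => heA h.1).2.2.le

theorem sdiff_subset_extActives_traldiTree :
    A \ G.traldiTree A ⊆ G.extActives (G.traldiTree A) := by
  intro e he
  obtain ⟨heA, heT⟩ := mem_sdiff.mp he
  refine mem_filter.mpr
    ⟨mem_univ e, traldiTree_isSpanningTree.extActive_iff.mpr ⟨heT, fun f _ hf => ?_⟩⟩
  have hef := lt_of_separates_greedyForest (traldiKey_injective A) heT hf
  rw [traldiKey_lt_traldiKey] at hef
  exact ((hef.resolve_right fun h => h.1 heA).2 heA).le

theorem IsSpanningTree.eq_traldiTree [Fintype V] (hT : G.IsSpanningTree T)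
    (hI : T \ A ⊆ G.intActives T) (hX : A \ T ⊆ G.extActives T) : T = G.traldiTree A := by
  have hInt : ∀ t ∈ T, t ∉ A → ∀ s, G.Separates T t s → t ≤ s := fun t ht htA =>
    (hT.intActive_iff.mp (mem_filter.mp (hI (mem_sdiff.mpr ⟨ht, htA⟩))).2).2
  have hExt : ∀ s ∈ A, s ∉ T → ∀ t ∈ T, G.Separates T t s → s ≤ t := fun s hsA hs =>
    (hT.extActive_iff.mp (mem_filter.mp (hX (mem_sdiff.mpr ⟨hsA, hs⟩))).2).2
  refine hT.eq_greedyForest (traldiKey_injective A) fun t ht s hs hsep => ?_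
  have hts : t ≠ s := by rintro rfl; exact hs ht
  rw [traldiKey_lt_traldiKey]
  by_cases htA : t ∈ A <;> by_cases hsA : s ∈ A
  · exact Or.inl ⟨htA, fun _ => (hExt s hsA hs t ht hsep).lt_of_ne hts.symm⟩
  · exact Or.inl ⟨htA, fun h => absurd h hsA⟩
  · exact absurd (hInt t ht htA s hsep)
      (not_le.mpr ((hExt s hsA hs t ht hsep).lt_of_ne hts.symm))
  · exact Or.inr ⟨hsA, htA, (hInt t ht htA s hsep).lt_of_ne hts⟩

/-- Crapo's interval partition: the sets `A` with canonical tree `T` form the Boolean interval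
`[T \ IA(T), T ∪ EA(T)]`. -/
theorem IsSpanningTree.traldiTree_eq_iff [Fintype V] (hT : G.IsSpanningTree T) :
    G.traldiTree A = T ↔ T \ A ⊆ G.intActives T ∧ A \ T ⊆ G.extActives T := by
  refine ⟨?_, fun ⟨hI, hX⟩ => (hT.eq_traldiTree hI hX).symm⟩
  rintro rfl
  exact ⟨sdiff_subset_intActives_traldiTree, sdiff_subset_extActives_traldiTree⟩

theorem kA_eq_kA_univ_add_card_traldiTree_sdiff [Fintype V] :
    G.kA A = G.kA univ + #(G.traldiTree A \ A) := by
  rw [traldiTree]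
  convert isUpClosed_traldiKey.kA_eq_kA_univ_add_card_sdiff (G := G) (traldiKey_injective A)

end TraldiTree

end MGraph

theorem Finset.sum_filter_sdiff_subset_and_sdiff_subset {α M : Type} [Fintype α] [DecidableEq α]
    [AddCommMonoid M] {T I X : Finset α} (hI : I ⊆ T) (hX : Disjoint X T) (f : Finset α → M) :
    ∑ A ∈ univ.filter (fun A => T \ A ⊆ I ∧ A \ T ⊆ X), f A =
      ∑ J ∈ I.powerset, ∑ Y ∈ X.powerset, f (T \ J ∪ Y) := by
  have hinv : ∀ A : Finset α, T \ (T \ A) ∪ A \ T = A := fun A => by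
    ext e; simp only [mem_union, mem_sdiff]; tauto
  rw [← sum_product']
  refine sum_nbij' (fun A => (T \ A, A \ T)) (fun q => T \ q.1 ∪ q.2)
    (fun A hA => by simpa using hA) (fun q hq => ?_) (fun A _ => hinv A) (fun q hq => ?_)
    (fun A _ => by rw [hinv])
  all_goals
    obtain ⟨J, Y⟩ := q
    simp only [mem_product, mem_powerset] at hq
    have hYT : ∀ e ∈ Y, e ∉ T := fun e he => disjoint_left.mp hX (hq.2 he)
  · simp only [mem_filter, mem_univ, true_and]
    constructor <;> intro e <;> simp only [mem_sdiff, mem_union] <;> grind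
  · ext e <;> simp only [mem_sdiff, mem_union] <;> grind

namespace MGraph

open Polynomial

variable {V E R : Type} [Fintype E] [LinearOrder E] {G : MGraph V E} {T : Finset E}

theorem prod_sdiff_eq_prod_intInactives_mul {M : Type} [CommMonoid M] (g : E → M) {J : Finset E}
    (hJ : J ⊆ G.intActives T) :
    ∏ e ∈ T \ J, g e =
      (∏ e ∈ G.intInactives T, g e) * ∏ e ∈ G.intActives T \ J, g e := by
  rw [← prod_union]
  · congr 1
    ext e
    have := @hJ e
    simp only [intActives, intInactives, mem_sdiff, mem_union, mem_filter] at this ⊢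
    tauto
  · exact disjoint_left.mpr fun e he he' =>
      (mem_filter.mp he).2 (mem_filter.mp (mem_sdiff.mp he').1).2

theorem IsSpanningTree.sum_traldiTree_eq [Fintype V] [CommRing R] (hT : G.IsSpanningTree T)
    (γ : E → R) :
    ∑ A ∈ univ.filter (fun A => G.traldiTree A = T), X ^ G.kA A * C (∏ e ∈ A, γ e) =
      X ^ G.kA univ * ((∏ e ∈ G.intInactives T, C (γ e)) *
        (∏ e ∈ G.intActives T, (C (γ e) + X)) * ∏ e ∈ G.extActives T, (C (γ e) + 1)) := by
  have hIT : G.intActives T ⊆ T := filter_subset _ _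
  have hXT : Disjoint (G.extActives T) T := disjoint_left.mpr fun e he => (mem_filter.mp he).2.1
  have hIA : ∏ e ∈ G.intActives T, (C (γ e) + X) =
      ∑ J ∈ (G.intActives T).powerset, X ^ #J * ∏ e ∈ G.intActives T \ J, C (γ e) := by
    simp_rw [add_comm (C _) X, prod_add, prod_const]
  have hEA : ∏ e ∈ G.extActives T, (C (γ e) + 1) =
      ∑ Y ∈ (G.extActives T).powerset, ∏ e ∈ Y, C (γ e) := by
    simp [prod_add]
  calc _ = ∑ A ∈ univ.filter (fun A => T \ A ⊆ G.intActives T ∧ A \ T ⊆ G.extActives T),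
          X ^ (G.kA univ + #(T \ A)) * C (∏ e ∈ A, γ e) := by
        refine sum_congr (filter_congr fun A _ => hT.traldiTree_eq_iff) fun A hA => ?_
        rw [kA_eq_kA_univ_add_card_traldiTree_sdiff,
          hT.traldiTree_eq_iff.mpr (mem_filter.mp hA).2]
    _ = ∑ J ∈ (G.intActives T).powerset, ∑ Y ∈ (G.extActives T).powerset,
          X ^ G.kA univ * ((∏ e ∈ G.intInactives T, C (γ e)) *
            (X ^ #J * ∏ e ∈ G.intActives T \ J, C (γ e)) * ∏ e ∈ Y, C (γ e)) := by
        rw [sum_filter_sdiff_subset_and_sdiff_subset hIT hXT]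
        refine sum_congr rfl fun J hJ => sum_congr rfl fun Y hY => ?_
        have hJ := mem_powerset.mp hJ
        have hYT := disjoint_of_subset_left (mem_powerset.mp hY) hXT
        have hJT : T \ (T \ J ∪ Y) = J := by
          ext e
          have := @hJ e
          have := @hIT e
          have := fun h : e ∈ Y => disjoint_left.mp hYT h
          simp only [mem_sdiff, mem_union]
          tauto
        rw [hJT, prod_union (hYT.symm.mono_left sdiff_subset), map_mul, map_prod, map_prod,
          prod_sdiff_eq_prod_intInactives_mul _ hJ, pow_add]
        ring
    _ = _ := by
        rw [hIA, hEA]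
        simp only [mul_sum, sum_mul]
        exact sum_comm

end MGraph

/-- Traldi's spanning tree expansion of the multivariate Tutte
polynomial:
`Z_T(G;θ,γ) = θ^{k(G)} Σ_T (∏_{II} γ_e)(∏_{IA}(γ_e+θ))(∏_{EA}(γ_e+1))`. -/
theorem ZT_spanning_tree_expansion {V E R : Type} [Fintype V] [Fintype E]
    [LinearOrder E] [CommRing R] (G : MGraph V E) (γ : E → R) :
    G.ZT γ = Polynomial.X ^ G.kA Finset.univ *
      ∑ T ∈ Finset.univ.filter (fun T => G.IsSpanningTree T),
        (∏ e ∈ G.intInactives T, Polynomial.C (γ e)) *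
        (∏ e ∈ G.intActives T, (Polynomial.C (γ e) + Polynomial.X)) *
        (∏ e ∈ G.extActives T, (Polynomial.C (γ e) + 1)) := by
  rw [MGraph.ZT, mul_sum, ← sum_fiberwise_of_maps_to (g := G.traldiTree)
    (fun A _ => mem_filter.mpr ⟨mem_univ _, MGraph.traldiTree_isSpanningTree⟩)]
  exact sum_congr rfl fun T hT => (mem_filter.mp hT).2.sum_traldiTree_eq γ
end

section
/- Let G be a finite graph with vertex weights in a commutative monoid S, edge weights γ, and linearly ordered edges. Then the V-polynomial (defined by its state sum) admits the spanning forest expansion V(G) = Σ_{F ∈ F(G)} x(F) · (∏_{e∈E(F)} γ_e) · (∏_{e externally active w.r.t. F} (1 + γ_e)), where F(G) is the set of spanning forests (acyclic spanning subgraphs) of G and x(F) = ∏_i x_{c_i} with c_i the sum of the vertex weights in the i-th component of F. -/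
open scoped Classical
open Finset

/-!
Every edge set `A` splits uniquely as `F ∪ X` with `F` a spanning forest and `X` a set of
edges externally active with respect to `F`: `F` is the forest that Kruskal's algorithm keeps
when it scans `A` from the largest edge down, and each edge it discards closes a cycle of
larger kept edges, i.e. is externally active. Externally active edges join vertices already
connected in `F`, so `F ∪ X` has the components of `F`, and the state sum regroups as
`Σ_F x(F) γ^F Σ_{X ⊆ EA(F)} γ^X = Σ_F x(F) γ^F ∏_{e ∈ EA(F)} (1 + γ_e)`.
-/

section

-- `IsForest` and `cycleEdges` erase edges using classical decidable equality.
attribute [local instance 2000] Classical.propDecidable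

namespace VGraph

variable {V E : Type} {G : VGraph V E} {A B F X : Finset E} {e f : E} {u v p q : V}

lemma exists_ends (G : VGraph V E) (f : E) : ∃ x y, G.ends f = s(x, y) :=
  Sym2.exists.mp ⟨G.ends f, rfl⟩

lemma Connects.refl (u : V) : G.Connects A u u := Relation.EqvGen.refl u

lemma Connects.symm (h : G.Connects A u v) : G.Connects A v u := Relation.EqvGen.symm u v h

lemma Connects.trans (h₁ : G.Connects A u v) (h₂ : G.Connects A v p) : G.Connects A u p :=
  Relation.EqvGen.trans u v p h₁ h₂

lemma Connects.of_mem (he : e ∈ A) (h : G.ends e = s(u, v)) : G.Connects A u v :=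
  Relation.EqvGen.rel u v ⟨e, he, h⟩

lemma EndsConnected.connects (h : G.EndsConnected A e) (he : G.ends e = s(u, v)) :
    G.Connects A u v := by
  obtain ⟨a, b, hab, hc⟩ := h
  rcases Sym2.eq_iff.1 (hab.symm.trans he) with ⟨rfl, rfl⟩ | ⟨rfl, rfl⟩
  · exact hc
  · exact hc.symm

lemma endsConnected_of_mem (he : e ∈ A) : G.EndsConnected A e := by
  obtain ⟨x, y, h⟩ := G.exists_ends e
  exact ⟨x, y, h, .of_mem he h⟩

lemma Connects.of_forall_endsConnected (hA : ∀ f ∈ A, G.EndsConnected B f)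
    (h : G.Connects A u v) : G.Connects B u v := by
  induction h with
  | rel x y hxy =>
    obtain ⟨f, hf, hends⟩ := hxy
    exact (hA f hf).connects hends
  | refl x => exact .refl x
  | symm x y _ ih => exact ih.symm
  | trans x y z _ _ ih₁ ih₂ => exact ih₁.trans ih₂

lemma EndsConnected.of_forall_endsConnected (hA : ∀ f ∈ A, G.EndsConnected B f)
    (h : G.EndsConnected A e) : G.EndsConnected B e := by
  obtain ⟨x, y, hxy, hc⟩ := h
  exact ⟨x, y, hxy, hc.of_forall_endsConnected hA⟩

lemma EndsConnected.mono (hAB : A ⊆ B) (h : G.EndsConnected A e) : G.EndsConnected B e :=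
  h.of_forall_endsConnected fun _ hf => endsConnected_of_mem (hAB hf)

lemma connects_union_iff (hX : ∀ e ∈ X, G.EndsConnected A e) :
    G.Connects (A ∪ X) u v ↔ G.Connects A u v :=
  ⟨.of_forall_endsConnected fun f hf => (mem_union.1 hf).elim endsConnected_of_mem (hX f),
    .of_forall_endsConnected fun _ hf => endsConnected_of_mem (mem_union_left X hf)⟩

lemma Connects.erase_or (hf : G.ends f = s(p, q)) (h : G.Connects A u v) :
    G.Connects (A.erase f) u v ∨
      ((G.Connects (A.erase f) u p ∨ G.Connects (A.erase f) u q) ∧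
        (G.Connects (A.erase f) v p ∨ G.Connects (A.erase f) v q)) := by
  induction h with
  | rel x y hxy =>
    obtain ⟨g, hg, hends⟩ := hxy
    by_cases hgf : g = f
    · subst hgf
      rcases Sym2.eq_iff.1 (hends.symm.trans hf) with ⟨rfl, rfl⟩ | ⟨rfl, rfl⟩
      · exact .inr ⟨.inl (.refl _), .inr (.refl _)⟩
      · exact .inr ⟨.inr (.refl _), .inl (.refl _)⟩
    · exact .inl (.of_mem (mem_erase.2 ⟨hgf, hg⟩) hends)
  | refl x => exact .inl (.refl x)
  | symm x y _ ih => exact ih.imp Connects.symm And.symm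
  | trans x y z _ _ ih₁ ih₂ =>
    rcases ih₁ with h₁ | ⟨hx, hy⟩ <;> rcases ih₂ with h₂ | ⟨hy', hz⟩
    · exact .inl (h₁.trans h₂)
    · exact .inr ⟨hy'.imp h₁.trans h₁.trans, hz⟩
    · exact .inr ⟨hx, hy.imp h₂.symm.trans h₂.symm.trans⟩
    · exact .inr ⟨hx, hz⟩

lemma EndsConnected.exchange (h : G.EndsConnected B e) (hf : ¬ G.EndsConnected (B.erase f) e) :
    G.EndsConnected (insert e (B.erase f)) f := by
  obtain ⟨u, v, huv, hc⟩ := h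
  obtain ⟨p, q, hpq⟩ := G.exists_ends f
  have hnot : ¬ G.Connects (B.erase f) u v := fun h => hf ⟨u, v, huv, h⟩
  have he : G.Connects (insert e (B.erase f)) u v := .of_mem (mem_insert_self e _) huv
  have hmono : ∀ {x y}, G.Connects (B.erase f) x y → G.Connects (insert e (B.erase f)) x y :=
    .of_forall_endsConnected fun _ hg => endsConnected_of_mem (mem_insert_of_mem hg)
  refine ⟨p, q, hpq, ?_⟩
  rcases hc.erase_or hpq with h | ⟨hu | hu, hv | hv⟩
  · exact absurd h hnot
  · exact absurd (hu.trans hv.symm) hnot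
  · exact (hmono hu).symm.trans (he.trans (hmono hv))
  · exact (hmono hv).symm.trans (he.symm.trans (hmono hu))
  · exact absurd (hu.trans hv.symm) hnot

/-- An inclusion-minimal `C ⊆ B` joining the ends of `e` is a path, closed by `e` to a cycle. -/
lemma EndsConnected.exists_cycle (h : G.EndsConnected B e) (he : e ∉ B) :
    ∃ C ⊆ B, ∀ f ∈ insert e C, G.EndsConnected ((insert e C).erase f) f := by
  obtain ⟨C, hCB, hC⟩ := exists_minimal_le_of_wellFoundedLT (G.EndsConnected · e) B h
  have heC : e ∉ C := fun h => he (hCB h)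
  refine ⟨C, hCB, fun f hf => ?_⟩
  rcases mem_insert.1 hf with rfl | hfC
  · rw [erase_insert heC]
    exact hC.prop
  · rw [erase_insert_of_ne (ne_of_mem_of_not_mem hfC heC).symm]
    exact hC.prop.exchange (hC.not_prop_of_lt (erase_ssubset hfC))

lemma mem_cycleEdges :
    f ∈ G.cycleEdges F e ↔ f = e ∨ f ∈ F ∧ ¬ G.EndsConnected (F.erase f) e := by
  simp only [cycleEdges, mem_insert, mem_filter]

section MaxForest

variable [LinearOrder E]

/-- The spanning forest of `(V, A)` found by Kruskal's algorithm scanning from the largest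
edge down. -/
noncomputable def maxForest (G : VGraph V E) (A : Finset E) : Finset E :=
  A.filter fun e => ¬ G.EndsConnected (A.filter (e < ·)) e

lemma maxForest_subset : G.maxForest A ⊆ A := filter_subset _ _

lemma endsConnected_filter_gt_of_notMem_maxForest (he : e ∈ A) (hM : e ∉ G.maxForest A) :
    G.EndsConnected (A.filter (e < ·)) e := by
  by_contra h
  exact hM (mem_filter.2 ⟨he, h⟩)

lemma EndsConnected.filter_gt_maxForest [Finite E] (h : G.EndsConnected (A.filter (e < ·)) e) :
    G.EndsConnected ((G.maxForest A).filter (e < ·)) e := by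
  induction e using WellFoundedGT.induction with
  | _ e ih =>
    refine h.of_forall_endsConnected fun f hf => ?_
    obtain ⟨hfA, hef⟩ := mem_filter.1 hf
    by_cases hfM : f ∈ G.maxForest A
    · exact endsConnected_of_mem (mem_filter.2 ⟨hfM, hef⟩)
    · refine (ih f hef (endsConnected_filter_gt_of_notMem_maxForest hfA hfM)).mono ?_
      exact monotone_filter_right _ fun g _ hfg => hef.trans hfg

lemma isForest_maxForest : G.IsForest (G.maxForest A) := by
  intro e he hc
  obtain ⟨C, hCM, hcyc⟩ := hc.exists_cycle (notMem_erase e _)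
  have hDM : insert e C ⊆ G.maxForest A := insert_subset he (hCM.trans (erase_subset _ _))
  have hD : (insert e C).Nonempty := insert_nonempty e C
  -- the smallest edge of the cycle is joined by larger edges of `A`, so it is not kept
  set g := (insert e C).min' hD
  have hgD : g ∈ insert e C := min'_mem _ hD
  refine (mem_filter.1 (hDM hgD)).2 ((hcyc g hgD).mono fun f hf => mem_filter.2 ⟨?_, ?_⟩)
  · exact maxForest_subset (hDM (mem_of_mem_erase hf))
  · exact lt_of_le_of_ne (min'_le _ f (mem_of_mem_erase hf)) (ne_of_mem_erase hf).symm

lemma extActive_maxForest [Finite E] (heA : e ∈ A) (hM : e ∉ G.maxForest A) :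
    G.ExtActive (G.maxForest A) e := by
  have h := (endsConnected_filter_gt_of_notMem_maxForest heA hM).filter_gt_maxForest
  refine ⟨hM, h.mono (filter_subset _ _), fun f hf => ?_⟩
  rcases mem_cycleEdges.1 hf with rfl | ⟨-, hf⟩
  · exact le_rfl
  · by_contra hlt
    refine hf (h.mono fun g hg => mem_erase.2 ⟨?_, (mem_filter.1 hg).1⟩)
    exact ((not_le.1 hlt).trans (mem_filter.1 hg).2).ne'

lemma ExtActive.endsConnected_filter_gt (hF : G.IsForest F) (h : G.ExtActive F e) :
    G.EndsConnected (F.filter (e < ·)) e := by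
  obtain ⟨heF, hEC, hmin⟩ := h
  obtain ⟨C, hCF, hcyc⟩ := hEC.exists_cycle heF
  have heC : e ∉ C := fun h => heF (hCF h)
  have hC : G.EndsConnected C e := by
    simpa only [erase_insert heC] using hcyc e (mem_insert_self e C)
  refine hC.mono fun f hf =>
    mem_filter.2 ⟨hCF hf, lt_of_le_of_ne ?_ (ne_of_mem_of_not_mem hf heC).symm⟩
  refine hmin f (mem_cycleEdges.2 (.inr ⟨hCF hf, fun hef => hF f (hCF hf) ?_⟩))
  -- `e` and the rest of the cycle join the ends of `f` within `F - f`
  refine (hcyc f (mem_insert_of_mem hf)).of_forall_endsConnected fun g hg => ?_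
  rcases mem_insert.1 (mem_of_mem_erase hg) with rfl | hgC
  · exact hef
  · exact endsConnected_of_mem (mem_erase.2 ⟨ne_of_mem_erase hg, hCF hgC⟩)

lemma maxForest_union (hF : G.IsForest F)
    (hX : ∀ e ∈ X, G.EndsConnected (F.filter (e < ·)) e) : G.maxForest (F ∪ X) = F := by
  ext e
  constructor
  · intro he
    obtain ⟨heFX, hne⟩ := mem_filter.1 he
    refine (mem_union.1 heFX).resolve_right fun heX => hne ?_
    exact (hX e heX).mono (filter_subset_filter _ subset_union_left)
  · intro heF
    refine mem_filter.2 ⟨mem_union_left X heF, fun h => hF e heF ?_⟩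
    refine h.of_forall_endsConnected fun f hf => ?_
    obtain ⟨hfFX, hef⟩ := mem_filter.1 hf
    rcases mem_union.1 hfFX with hfF | hfX
    · exact endsConnected_of_mem (mem_erase.2 ⟨hef.ne', hfF⟩)
    · refine (hX f hfX).mono fun g hg => mem_erase.2 ⟨?_, (mem_filter.1 hg).1⟩
      exact (hef.trans (mem_filter.1 hg).2).ne'

variable [Fintype E]

lemma extActive_of_mem_powerset_extActives (hX : X ∈ (G.extActives F).powerset) (he : e ∈ X) :
    G.ExtActive F e :=
  (mem_filter.1 (mem_powerset.1 hX he)).2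

lemma disjoint_of_mem_powerset_extActives (hX : X ∈ (G.extActives F).powerset) :
    Disjoint F X :=
  disjoint_right.2 fun _ he => (extActive_of_mem_powerset_extActives hX he).1

lemma sum_eq_sum_isForest_sum_powerset_extActives {M : Type*} [AddCommMonoid M]
    (w : Finset E → M) :
    ∑ A, w A =
      ∑ F ∈ univ.filter G.IsForest, ∑ X ∈ (G.extActives F).powerset, w (F ∪ X) := by
  rw [sum_sigma']
  refine (sum_nbij' (fun p : (_ : Finset E) × Finset E => p.1 ∪ p.2)
    (fun A => ⟨G.maxForest A, A \ G.maxForest A⟩) (fun _ _ => mem_univ _)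
    (fun A _ => ?_) (fun p hp => ?_) (fun A _ => ?_) (fun _ _ => rfl)).symm
  · refine mem_sigma.2 ⟨mem_filter.2 ⟨mem_univ _, isForest_maxForest⟩, ?_⟩
    refine mem_powerset.2 fun e he => mem_filter.2 ⟨mem_univ _, ?_⟩
    exact extActive_maxForest (mem_sdiff.1 he).1 (mem_sdiff.1 he).2
  · obtain ⟨hF, hXF⟩ := mem_sigma.1 hp
    have hF := (mem_filter.1 hF).2
    rw [maxForest_union hF fun e he =>
        (extActive_of_mem_powerset_extActives hXF he).endsConnected_filter_gt hF,
      union_sdiff_cancel_left (disjoint_of_mem_powerset_extActives hXF)]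
  · exact union_sdiff_of_subset maxForest_subset

end MaxForest

lemma prod_compWeight_congr {S : Type} {M : Type*} [Fintype V] [AddCommMonoid S] [CommMonoid M]
    (ω : V → S) (φ : S → M) (h : ∀ u v, G.Connects A u v ↔ G.Connects B u v) :
    ∏ c : G.Comp A, φ (G.compWeight A ω c) = ∏ c : G.Comp B, φ (G.compWeight B ω c) := by
  refine Fintype.prod_equiv (Quotient.congr (Equiv.refl V) h) _ _ fun c => ?_
  obtain ⟨v, rfl⟩ := Quotient.exists_rep c
  have hverts : G.compVerts B ⟦v⟧ = G.compVerts A ⟦v⟧ := by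
    ext w
    simp only [compVerts, mem_filter, mem_univ, true_and, Quotient.eq]
    exact (h w v).symm
  change φ (∑ w ∈ G.compVerts A ⟦v⟧, ω w) = φ (∑ w ∈ G.compVerts B ⟦v⟧, ω w)
  rw [hverts]

end VGraph

/-- Spanning forest expansion of the V-polynomial:
`V(G) = Σ_{F∈𝓕(G)} x(F) (∏_{e∈F} γ_e)(∏_{e∈EA(F)} (1+γ_e))`. -/
theorem Vpoly_spanning_forest_expansion {V E S R : Type} [Fintype V] [Fintype E]
    [LinearOrder E] [AddCommMonoid S] [CommRing R] (G : VGraph V E)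
    (ω : V → S) (γ : E → R) :
    G.Vpoly ω γ =
      ∑ F ∈ Finset.univ.filter (fun F => G.IsForest F),
        (∏ c : G.Comp F, MvPolynomial.X (G.compWeight F ω c)) *
        MvPolynomial.C (∏ e ∈ F, γ e) *
        ∏ e ∈ G.extActives F, (1 + MvPolynomial.C (γ e)) := by
  rw [VGraph.Vpoly, G.sum_eq_sum_isForest_sum_powerset_extActives]
  refine sum_congr rfl fun F _ => ?_
  rw [prod_one_add, mul_sum]
  refine sum_congr rfl fun X hX => ?_
  have hconn : ∀ u v, G.Connects (F ∪ X) u v ↔ G.Connects F u v := fun _ _ =>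
    VGraph.connects_union_iff fun _ he => (VGraph.extActive_of_mem_powerset_extActives hX he).2.1
  rw [G.prod_compWeight_congr ω MvPolynomial.X hconn,
    prod_union (VGraph.disjoint_of_mem_powerset_extActives hX), map_mul, mul_assoc,
    map_prod MvPolynomial.C γ X]

end
end

section
/- Let G be a finite graph with vertex weights in a commutative monoid S, edge weights γ, and linearly ordered edges. Then the V-polynomial admits the spanning tree expansion V(G) = Σ_{T∈T(G)} (∏_{e internally inactive w.r.t. T} γ_e) · (∏_{e externally active w.r.t. T} (γ_e + 1)) · V(T / II(G,T)), where T(G) is the set of maximal spanning forests of G, II(G,T) is the set of internally inactive edges of T, and T / II(G,T) is the vertex-weighted forest obtained from T by contracting all internally inactive edges (merged vertices receive the sum of the weights of the merged vertices). -/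
open scoped Classical
open Finset

structure VWGraph (V E : Type) where
  ends : E → Sym2 V

namespace VWGraph

variable {V E S R : Type} [Fintype V] [Fintype E]

/-- Two vertices are joined by an edge of `A`. -/
def adjRel (G : VWGraph V E) (A : Finset E) (u v : V) : Prop :=
  ∃ e ∈ A, G.ends e = s(u, v)

/-- The setoid on vertices whose classes are the connected components of the
spanning subgraph `(V, A)`. -/
def compSetoid (G : VWGraph V E) (A : Finset E) : Setoid V :=
  ⟨Relation.EqvGen (G.adjRel A), Relation.EqvGen.is_equivalence _⟩

/-- The connected components of the spanning subgraph `(V, A)`. -/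
def Comp (G : VWGraph V E) (A : Finset E) : Type := Quotient (G.compSetoid A)

noncomputable instance (G : VWGraph V E) (A : Finset E) : Fintype (G.Comp A) :=
  @Quotient.fintype V _ (G.compSetoid A) (Classical.decRel _)

/-- `k(A)`: the number of connected components of the spanning subgraph `(V, A)`. -/
noncomputable def kA (G : VWGraph V E) (A : Finset E) : ℕ := Nat.card (G.Comp A)

/-- `u` and `v` are connected in the spanning subgraph `(V, A)`. -/
def Connects (G : VWGraph V E) (A : Finset E) (u v : V) : Prop :=
  Relation.EqvGen (G.adjRel A) u v

/-- The endpoints of `e` are connected in the spanning subgraph `(V, A)`. -/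
def EndsConnected (G : VWGraph V E) (A : Finset E) (e : E) : Prop :=
  ∃ u v, G.ends e = s(u, v) ∧ G.Connects A u v

def IsLoop (G : VWGraph V E) (e : E) : Prop := (G.ends e).IsDiag

/-- `(V, A)` is a forest (acyclic spanning subgraph): every edge of `A` is a bridge of it. -/
def IsForest (G : VWGraph V E) (A : Finset E) : Prop :=
  ∀ e ∈ A, ¬ G.EndsConnected (A.erase e) e

/-- All vertices are pairwise connected using edges of `A`. -/
def ConnectsAll (G : VWGraph V E) (A : Finset E) : Prop := ∀ u v, G.Connects A u v

/-- A maximal spanning forest: a forest restricting to a spanning tree of each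
connected component of `G`. -/
def IsSpanningTree (G : VWGraph V E) (T : Finset E) : Prop :=
  G.IsForest T ∧ ∀ u v, G.Connects T u v ↔ G.Connects Finset.univ u v

/-- `e ∈ T` is internally active: `e` is minimal in the cut
`{f : (T - e) ∪ {f} ∈ 𝒯(G)}`. -/
def IntActive [LinearOrder E] (G : VWGraph V E) (T : Finset E) (e : E) : Prop :=
  e ∈ T ∧ ∀ f, G.IsSpanningTree (insert f (T.erase e)) → e ≤ f

/-- The edge set of the unique cycle of `T ∪ {e}` (when it exists):
`e` together with those `f ∈ T` whose removal disconnects the ends of `e`. -/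
noncomputable def cycleEdges (G : VWGraph V E) (T : Finset E) (e : E) : Finset E :=
  insert e (T.filter fun f => ¬ G.EndsConnected (T.erase f) e)

/-- `e ∉ T` is externally active: `T ∪ {e}` contains a cycle through `e` and
`e` is the minimal edge of that cycle. -/
def ExtActive [LinearOrder E] (G : VWGraph V E) (T : Finset E) (e : E) : Prop :=
  e ∉ T ∧ G.EndsConnected T e ∧ ∀ f ∈ G.cycleEdges T e, e ≤ f

/-- The vertex set of the component `c` of `(V, A)`. -/
noncomputable def compVerts (G : VWGraph V E) (A : Finset E) (c : G.Comp A) : Finset V :=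
  Finset.univ.filter fun v => (Quotient.mk (G.compSetoid A) v) = c

/-- The total vertex weight of the component `c` of `(V, A)`. -/
noncomputable def compWeight [AddCommMonoid S] (G : VWGraph V E) (A : Finset E)
    (ω : V → S) (c : G.Comp A) : S :=
  ∑ v ∈ G.compVerts A c, ω v

/-- The V-polynomial, defined by its state sum. -/
noncomputable def Vpoly [AddCommMonoid S] [CommRing R] (G : VWGraph V E)
    (ω : V → S) (γ : E → R) : MvPolynomial S R :=
  ∑ A : Finset E, (∏ c : G.Comp A, MvPolynomial.X (G.compWeight A ω c)) *
    MvPolynomial.C (∏ e ∈ A, γ e)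

/-- The multivariate Tutte polynomial `Z_T(G; q, γ)` as a polynomial in `q`. -/
noncomputable def ZT [CommRing R] (G : VWGraph V E) (γ : E → R) : Polynomial R :=
  ∑ A : Finset E, Polynomial.X ^ (G.kA A) * Polynomial.C (∏ e ∈ A, γ e)

/-- Deletion of the edge `e`. -/
def del (G : VWGraph V E) (e : E) : VWGraph V {f : E // f ≠ e} := ⟨fun f => G.ends f.1⟩

/-- Contraction of the edge `e`: vertices are the components of `(V, {e})`. -/
noncomputable def contract (G : VWGraph V E) (e : E) : VWGraph (G.Comp {e}) {f : E // f ≠ e} :=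
  ⟨fun f => (G.ends f.1).map (Quotient.mk (G.compSetoid {e}))⟩

/-- The forest `T` with the edges of `B` contracted: vertices are the components
of `(V, B)` and edges are `T \ B`. -/
noncomputable def contractIn (G : VWGraph V E) (T B : Finset E) :
    VWGraph (G.Comp B) ↥(T \ B : Finset E) :=
  ⟨fun f => (G.ends f.1).map (Quotient.mk (G.compSetoid B))⟩

/-- The edges of `G` with both ends inside `P`. -/
noncomputable def edgesIn (G : VWGraph V E) (P : Finset V) : Finset E :=
  Finset.univ.filter fun e => ∀ v ∈ G.ends e, v ∈ P

/-- The subgraph of `G` induced by the vertex set `P`. -/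
noncomputable def induce (G : VWGraph V E) (P : Finset V) : VWGraph ↥P ↥(G.edgesIn P) :=
  ⟨fun e => (G.ends e.1).pmap (fun v hv => (⟨v, hv⟩ : ↥P))
    (by have he := e.2; simp only [edgesIn, Finset.mem_filter] at he; exact he.2)⟩

/-- The block `B` induces a connected subgraph of `G`. -/
def BlockConnected (G : VWGraph V E) (B : Finset V) : Prop :=
  ∀ u ∈ B, ∀ v ∈ B, Relation.EqvGen (G.adjRel (G.edgesIn B)) u v

/-- A connected partition of `V(G)`: every vertex lies in exactly one block,
blocks are nonempty, and each block induces a connected subgraph. -/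
def IsConnectedPartition (G : VWGraph V E) (P : Finset (Finset V)) : Prop :=
  (∀ B ∈ P, B.Nonempty) ∧ (∀ v : V, ∃! B, B ∈ P ∧ v ∈ B) ∧ ∀ B ∈ P, G.BlockConnected B

/-- The partition `Π(A)` of `V(G)` into the components of `(V, A)`. -/
noncomputable def partitionOf (G : VWGraph V E) (A : Finset E) : Finset (Finset V) :=
  Finset.univ.image fun c : G.Comp A => G.compVerts A c

/-- The internally inactive edges of the spanning tree `T`. -/
noncomputable def intInactives [LinearOrder E] (G : VWGraph V E) (T : Finset E) : Finset E :=
  T.filter fun e => ¬ G.IntActive T e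

/-- The internally active edges of the spanning tree `T`. -/
noncomputable def intActives [LinearOrder E] (G : VWGraph V E) (T : Finset E) : Finset E :=
  T.filter fun e => G.IntActive T e

/-- The externally active edges w.r.t. the spanning tree / forest `T`. -/
noncomputable def extActives [LinearOrder E] (G : VWGraph V E) (T : Finset E) : Finset E :=
  Finset.univ.filter fun e => G.ExtActive T e

/-- Kronecker delta `δ(σ_i, σ_j)` for the two ends of the edge `e`. -/
noncomputable def edgeDelta (G : VWGraph V E) {q : ℕ} (σ : V → Fin q) (e : E) : ℂ :=
  Sym2.lift ⟨fun u v => if σ u = σ v then 1 else 0, fun u v => by simp [eq_comm]⟩ (G.ends e)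

/-- The Potts partition function with variable interactions `J` and
field vectors `M`. -/
noncomputable def Zext (G : VWGraph V E) (q : ℕ) (β : ℂ) (J : E → ℂ) (M : V → Fin q → ℂ) : ℂ :=
  ∑ σ : V → Fin q, Complex.exp (β * ((∑ e : E, J e * G.edgeDelta σ e) +
    ∑ v : V, ∑ α : Fin q, M v α * (if α = σ v then 1 else 0)))

/-- The Potts partition function with constant interaction `J` and constant
field `H` favouring the first spin. -/
noncomputable def ZconstField (G : VWGraph V E) (q : ℕ) (β J H : ℂ) : ℂ :=
  ∑ σ : V → Fin q, Complex.exp (β * (J * (∑ e : E, G.edgeDelta σ e) +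
    H * ∑ v : V, (if (σ v : ℕ) = 0 then (1 : ℂ) else 0)))

/-- The zero-field Potts partition function with constant interaction `J`. -/
noncomputable def Zzero (G : VWGraph V E) (q : ℕ) (β J : ℂ) : ℂ :=
  ∑ σ : V → Fin q, Complex.exp (β * J * ∑ e : E, G.edgeDelta σ e)

end VWGraph

/-! Crapo's interval partition: scanning the edges of `A` in decreasing order and then the other
edges in increasing order, Kruskal's algorithm yields a spanning tree `T` with
`T \ IA(T) ⊆ A ⊆ T ∪ EA(T)`, and an exchange argument on the largest edge of `T₁ ∆ T₂` shows that
this tree is unique. So the state sum splits into sums over the intervals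
`[T \ IA(T), T ∪ EA(T)]`. Inside an interval the externally active edges close cycles through
internally inactive edges only, hence never change the components: they contribute the factor
`∏ (γ_e + 1)`, and the remaining sum over subsets of the internally active edges is the state sum
of `T` with its internally inactive edges contracted. -/

theorem Finset.sum_Icc_eq_sum_powerset_sum_powerset {α M : Type*} [DecidableEq α]
    [AddCommMonoid M] {I P Q : Finset α} (hIP : Disjoint I P) (hIQ : Disjoint I Q)
    (hPQ : Disjoint P Q) (F : Finset α → M) :
    ∑ A ∈ Finset.Icc I (I ∪ P ∪ Q), F A = ∑ B ∈ P.powerset, ∑ C ∈ Q.powerset, F (I ∪ B ∪ C) := by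
  rw [← Finset.sum_product' (f := fun B C => F (I ∪ B ∪ C))]
  symm
  refine Finset.sum_nbij' (fun p => I ∪ p.1 ∪ p.2) (fun A => (A ∩ P, A ∩ Q)) ?_ ?_ ?_ ?_
    fun _ _ => rfl
  all_goals
    simp only [Finset.mem_product, Finset.mem_powerset, Finset.mem_Icc, Finset.disjoint_left,
      Finset.subset_iff, Finset.ext_iff, Prod.ext_iff, Finset.mem_union, Finset.mem_inter] at *
    grind

namespace VWGraph

section Connectivity

variable {V E : Type} {G : VWGraph V E} {A B : Finset E} {e f : E} {u v w p q : V}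

theorem exists_ends_eq (G : VWGraph V E) (e : E) : ∃ u v, G.ends e = s(u, v) :=
  Sym2.ind (fun u v => ⟨u, v, rfl⟩) (G.ends e)

theorem connects_refl (G : VWGraph V E) (A : Finset E) (u : V) : G.Connects A u u :=
  Relation.EqvGen.refl u

theorem Connects.symm (h : G.Connects A u v) : G.Connects A v u :=
  Relation.EqvGen.symm _ _ h

theorem Connects.trans (h : G.Connects A u v) (h' : G.Connects A v w) : G.Connects A u w :=
  Relation.EqvGen.trans _ _ _ h h'

theorem connects_of_ends_eq (he : e ∈ A) (h : G.ends e = s(u, v)) : G.Connects A u v :=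
  Relation.EqvGen.rel _ _ ⟨e, he, h⟩

theorem Connects.mono (hAB : A ⊆ B) (h : G.Connects A u v) : G.Connects B u v :=
  Relation.EqvGen.mono (fun _ _ ⟨e, he, hx⟩ => ⟨e, hAB he, hx⟩) _ _ h

theorem endsConnected_iff (h : G.ends e = s(u, v)) : G.EndsConnected A e ↔ G.Connects A u v := by
  refine ⟨fun ⟨a, b, hab, hc⟩ => ?_, fun hc => ⟨u, v, h, hc⟩⟩
  rcases Sym2.eq_iff.mp (hab.symm.trans h) with ⟨rfl, rfl⟩ | ⟨rfl, rfl⟩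
  exacts [hc, hc.symm]

theorem endsConnected_of_mem (he : e ∈ A) : G.EndsConnected A e := by
  obtain ⟨u, v, h⟩ := G.exists_ends_eq e
  exact ⟨u, v, h, connects_of_ends_eq he h⟩

theorem EndsConnected.mono (hAB : A ⊆ B) (h : G.EndsConnected A e) : G.EndsConnected B e :=
  let ⟨u, v, huv, hc⟩ := h
  ⟨u, v, huv, hc.mono hAB⟩

theorem Connects.of_forall_endsConnected (hAB : ∀ f ∈ A, G.EndsConnected B f)
    (h : G.Connects A u v) : G.Connects B u v := by
  induction h with
  | rel x y hxy =>
    obtain ⟨f, hf, hends⟩ := hxy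
    exact (endsConnected_iff hends).mp (hAB f hf)
  | refl x => exact connects_refl G B x
  | symm x y _ ih => exact ih.symm
  | trans x y z _ _ ih ih' => exact ih.trans ih'

theorem EndsConnected.of_forall_endsConnected (hAB : ∀ f ∈ A, G.EndsConnected B f)
    (h : G.EndsConnected A e) : G.EndsConnected B e :=
  let ⟨u, v, huv, hc⟩ := h
  ⟨u, v, huv, hc.of_forall_endsConnected hAB⟩

variable [DecidableEq E]

theorem Connects.insert_cases (hf : G.ends f = s(p, q)) (h : G.Connects (insert f B) u v) :
    G.Connects B u v ∨ (G.Connects B u p ∧ G.Connects B q v) ∨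
      (G.Connects B u q ∧ G.Connects B p v) := by
  induction h with
  | rel x y hxy =>
    obtain ⟨g, hg, hends⟩ := hxy
    rcases Finset.mem_insert.mp hg with rfl | hgB
    · rcases Sym2.eq_iff.mp (hends.symm.trans hf) with ⟨rfl, rfl⟩ | ⟨rfl, rfl⟩
      · exact Or.inr (Or.inl ⟨connects_refl G B x, connects_refl G B y⟩)
      · exact Or.inr (Or.inr ⟨connects_refl G B x, connects_refl G B y⟩)
    · exact Or.inl (connects_of_ends_eq hgB hends)
  | refl x => exact Or.inl (connects_refl G B x)
  | symm x y _ ih =>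
    rcases ih with h | ⟨h₁, h₂⟩ | ⟨h₁, h₂⟩
    · exact Or.inl h.symm
    · exact Or.inr (Or.inr ⟨h₂.symm, h₁.symm⟩)
    · exact Or.inr (Or.inl ⟨h₂.symm, h₁.symm⟩)
  | trans x y z _ _ ih ih' =>
    rcases ih with h₁ | ⟨h₁, h₂⟩ | ⟨h₁, h₂⟩ <;> rcases ih' with h₃ | ⟨h₃, h₄⟩ | ⟨h₃, h₄⟩
    · exact Or.inl (h₁.trans h₃)
    · exact Or.inr (Or.inl ⟨h₁.trans h₃, h₄⟩)
    · exact Or.inr (Or.inr ⟨h₁.trans h₃, h₄⟩)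
    · exact Or.inr (Or.inl ⟨h₁, h₂.trans h₃⟩)
    · exact Or.inr (Or.inl ⟨h₁, h₄⟩)
    · exact Or.inl (h₁.trans h₄)
    · exact Or.inr (Or.inr ⟨h₁, h₂.trans h₃⟩)
    · exact Or.inl (h₁.trans h₄)
    · exact Or.inr (Or.inr ⟨h₁, h₄⟩)

theorem endsConnected_insert_swap (he : ¬ G.EndsConnected B e)
    (h : G.EndsConnected (insert f B) e) : G.EndsConnected (insert e B) f := by
  obtain ⟨u, v, huv, hc⟩ := h
  obtain ⟨p, q, hpq⟩ := G.exists_ends_eq f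
  have hB : B ⊆ insert e B := Finset.subset_insert e B
  have hvu : G.Connects (insert e B) v u := (connects_of_ends_eq (mem_insert_self e B) huv).symm
  refine ⟨p, q, hpq, ?_⟩
  rcases hc.insert_cases hpq with hc | ⟨hup, hqv⟩ | ⟨huq, hpv⟩
  · exact absurd ⟨u, v, huv, hc⟩ he
  · exact ((hup.symm.mono hB).trans hvu.symm).trans (hqv.symm.mono hB)
  · exact ((hpv.mono hB).trans hvu).trans (huq.mono hB)

end Connectivity

section Forest

variable {V E : Type} [DecidableEq E] {G : VWGraph V E} {A D F : Finset E} {e g : E} {u v : V}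

-- `IsForest` and `cycleEdges` were elaborated with the classical `DecidableEq E`; the next two
-- lemmas restate them for any instance, such as the one coming from a `LinearOrder E`.
theorem isForest_iff : G.IsForest F ↔ ∀ e ∈ F, ¬ G.EndsConnected (F.erase e) e := by
  obtain rfl : ‹DecidableEq E› = fun a b => Classical.propDecidable (a = b) := Subsingleton.elim _ _
  rfl

theorem mem_cycleEdges {T : Finset E} {f : E} :
    f ∈ G.cycleEdges T e ↔ f = e ∨ f ∈ T ∧ ¬ G.EndsConnected (T.erase f) e := by
  obtain rfl : ‹DecidableEq E› = fun a b => Classical.propDecidable (a = b) := Subsingleton.elim _ _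
  simp only [cycleEdges, Finset.mem_insert, Finset.mem_filter]

theorem IsForest.not_endsConnected_erase (hF : G.IsForest F) (he : e ∈ F) :
    ¬ G.EndsConnected (F.erase e) e :=
  isForest_iff.mp hF e he

theorem IsForest.subset (hF : G.IsForest F) (hAF : A ⊆ F) : G.IsForest A :=
  isForest_iff.mpr fun e he hc =>
    hF.not_endsConnected_erase (hAF he) (hc.mono (Finset.erase_subset_erase e hAF))

theorem IsForest.insert (hF : G.IsForest F) (he : ¬ G.EndsConnected F e) :
    G.IsForest (insert e F) := by
  have heF : e ∉ F := fun h => he (endsConnected_of_mem h)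
  refine isForest_iff.mpr fun g hg => ?_
  by_cases hge : g = e
  · subst hge
    rwa [Finset.erase_insert heF]
  · have hgF : g ∈ F := (Finset.mem_insert.mp hg).resolve_left hge
    rw [Finset.erase_insert_of_ne (Ne.symm hge)]
    intro hc
    have := endsConnected_insert_swap (hF.not_endsConnected_erase hgF) hc
    rw [Finset.insert_erase hgF] at this
    exact he this

theorem IsForest.connects_erase (hF : G.IsForest F) (hDF : D ⊆ F)
    (hg : G.Connects (F.erase g) u v) (h : G.Connects D u v) : G.Connects (D.erase g) u v := by
  by_cases hgD : g ∈ D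
  · obtain ⟨p, q, hpq⟩ := G.exists_ends_eq g
    have hsub : D.erase g ⊆ F.erase g := Finset.erase_subset_erase g hDF
    rw [← Finset.insert_erase hgD] at h
    rcases h.insert_cases hpq with h | ⟨hup, hqv⟩ | ⟨huq, hpv⟩
    · exact h
    · refine absurd ⟨p, q, hpq, ?_⟩ (hF.not_endsConnected_erase (hDF hgD))
      exact ((hup.symm.mono hsub).trans hg).trans (hqv.symm.mono hsub)
    · refine absurd ⟨p, q, hpq, ?_⟩ (hF.not_endsConnected_erase (hDF hgD))
      exact ((hpv.mono hsub).trans hg.symm).trans (huq.mono hsub)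
  · rwa [Finset.erase_eq_of_notMem hgD]

theorem IsForest.endsConnected_filter (hF : G.IsForest F) (h : G.EndsConnected F e) :
    G.EndsConnected (F.filter fun f => ¬ G.EndsConnected (F.erase f) e) e := by
  obtain ⟨u, v, huv, hc⟩ := h
  refine ⟨u, v, huv, ?_⟩
  rw [Finset.filter_not]
  suffices ∀ s ⊆ F.filter (fun f => G.EndsConnected (F.erase f) e), G.Connects (F \ s) u v from
    this _ subset_rfl
  intro s hs
  induction s using Finset.induction_on with
  | empty => rwa [Finset.sdiff_empty]
  | insert g s _ ih =>
    obtain ⟨hg, hs⟩ := Finset.insert_subset_iff.mp hs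
    rw [Finset.sdiff_insert]
    exact hF.connects_erase Finset.sdiff_subset
      ((endsConnected_iff huv).mp (Finset.mem_filter.mp hg).2) (ih hs)

end Forest

section SpanningTree

variable {V E : Type} [Fintype E] {G : VWGraph V E} {T : Finset E} {e f : E}

theorem IsSpanningTree.endsConnected (hT : G.IsSpanningTree T) (e : E) : G.EndsConnected T e :=
  let ⟨u, v, huv⟩ := G.exists_ends_eq e
  ⟨u, v, huv, (hT.2 u v).mpr (connects_of_ends_eq (Finset.mem_univ e) huv)⟩

variable [DecidableEq E]

theorem IsSpanningTree.exchange (hT : G.IsSpanningTree T) (hf : f ∈ T)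
    (he : ¬ G.EndsConnected (T.erase f) e) : G.IsSpanningTree (insert e (T.erase f)) := by
  refine ⟨(hT.1.subset (Finset.erase_subset f T)).insert he, fun u v =>
    ⟨(·.mono (Finset.subset_univ _)), fun h => ((hT.2 u v).mpr h).of_forall_endsConnected ?_⟩⟩
  intro g hg
  by_cases hgf : g = f
  · subst hgf
    refine endsConnected_insert_swap he ?_
    rw [Finset.insert_erase hf]
    exact hT.endsConnected e
  · exact endsConnected_of_mem (Finset.mem_insert_of_mem (Finset.mem_erase.mpr ⟨hgf, hg⟩))

end SpanningTree

section Activity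

variable {V E : Type} [Fintype E] [LinearOrder E] {G : VWGraph V E} {A T T₁ T₂ : Finset E}
  {e f x : E}

theorem intActive_of_forall_lt (hT : G.IsSpanningTree T) (he : e ∈ T)
    (h : ∀ f < e, f ∉ T → G.EndsConnected (T.erase e) f) : G.IntActive T e := by
  refine ⟨he, fun f hf => le_of_not_gt fun hfe => hT.1.not_endsConnected_erase he ?_⟩
  have hf' : ∀ g ∈ insert f (T.erase e), G.EndsConnected (T.erase e) g := by
    intro g hg
    rcases Finset.mem_insert.mp hg with rfl | hg
    · by_cases hgT : g ∈ T
      · exact endsConnected_of_mem (Finset.mem_erase.mpr ⟨hfe.ne, hgT⟩)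
      · exact h g hfe hgT
    · exact endsConnected_of_mem hg
  exact (hf.endsConnected e).of_forall_endsConnected hf'

theorem ExtActive.not_intActive (hT : G.IsSpanningTree T) (he : G.ExtActive T e) (hf : f ∈ T)
    (hef : ¬ G.EndsConnected (T.erase f) e) : ¬ G.IntActive T f := fun hf' =>
  he.1 (le_antisymm (he.2.2 f (mem_cycleEdges.mpr (Or.inr ⟨hf, hef⟩)))
    (hf'.2 e (hT.exchange hf hef)) ▸ hf)

theorem mem_intInactives : e ∈ G.intInactives T ↔ e ∈ T ∧ ¬ G.IntActive T e := by
  simp [intInactives]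

theorem mem_intActives : e ∈ G.intActives T ↔ e ∈ T ∧ G.IntActive T e := by
  simp [intActives]

theorem mem_extActives : e ∈ G.extActives T ↔ G.ExtActive T e := by
  simp [extActives]

theorem ExtActive.endsConnected_intInactives (hT : G.IsSpanningTree T) (he : G.ExtActive T e) :
    G.EndsConnected (G.intInactives T) e :=
  (hT.1.endsConnected_filter he.2.1).mono fun _ hf =>
    have hf := Finset.mem_filter.mp hf
    mem_intInactives.mpr ⟨hf.1, he.not_intActive hT hf.1 hf.2⟩

noncomputable def activityInterval (G : VWGraph V E) (T : Finset E) : Finset (Finset E) :=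
  Finset.Icc (G.intInactives T) (T ∪ G.extActives T)

theorem mem_activityInterval : A ∈ G.activityInterval T ↔
    (∀ e ∈ T, e ∉ A → G.IntActive T e) ∧ ∀ e ∈ A, e ∉ T → G.ExtActive T e := by
  simp only [activityInterval, Finset.mem_Icc, Finset.subset_iff, mem_intInactives,
    Finset.mem_union, mem_extActives]
  grind

theorem exists_lt_of_mem_activityInterval (h₁ : G.IsSpanningTree T₁) (h₂ : G.IsSpanningTree T₂)
    (hA₁ : A ∈ G.activityInterval T₁) (hA₂ : A ∈ G.activityInterval T₂)
    (hx₁ : x ∈ T₁) (hx₂ : x ∉ T₂) : ∃ y ∈ T₂, y ∉ T₁ ∧ x < y := by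
  by_cases hxA : x ∈ A
  · -- `x` is externally active for `T₂`, and its cycle cannot lie in the forest `T₁`
    have hx := (mem_activityInterval.mp hA₂).2 x hxA hx₂
    by_contra! hcyc
    refine h₁.1.not_endsConnected_erase hx₁ ((h₂.1.endsConnected_filter hx.2.1).mono ?_)
    intro y hy
    obtain ⟨hy₂, hy⟩ := Finset.mem_filter.mp hy
    refine Finset.mem_erase.mpr ⟨fun hyx => hx₂ (hyx ▸ hy₂), ?_⟩
    by_contra hy₁
    refine (hcyc y hy₂ hy₁).not_gt (lt_of_le_of_ne ?_ fun hxy => hx₂ (hxy ▸ hy₂))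
    exact hx.2.2 y (mem_cycleEdges.mpr (Or.inr ⟨hy₂, hy⟩))
  · -- `x` is internally active for `T₁`; exchange it against an edge of `T₂` crossing its cut
    have hx := (mem_activityInterval.mp hA₁).1 x hx₁ hxA
    obtain ⟨y, hy₂, hy⟩ : ∃ y ∈ T₂, ¬ G.EndsConnected (T₁.erase x) y := by
      by_contra! hall
      exact h₁.1.not_endsConnected_erase hx₁
        ((h₂.endsConnected x).of_forall_endsConnected hall)
    have hy₁ : y ∉ T₁ := fun hy₁ =>
      hy (endsConnected_of_mem (Finset.mem_erase.mpr ⟨fun hyx => hx₂ (hyx ▸ hy₂), hy₁⟩))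
    exact ⟨y, hy₂, hy₁, lt_of_le_of_ne (hx.2 y (h₁.exchange hx₁ hy)) fun hxy => hy₁ (hxy ▸ hx₁)⟩

theorem eq_of_mem_activityInterval (h₁ : G.IsSpanningTree T₁) (h₂ : G.IsSpanningTree T₂)
    (hA₁ : A ∈ G.activityInterval T₁) (hA₂ : A ∈ G.activityInterval T₂) : T₁ = T₂ := by
  by_contra hne
  have hD : (symmDiff T₁ T₂).Nonempty := Finset.symmDiff_nonempty.mpr hne
  obtain ⟨y, hy, hxy⟩ : ∃ y ∈ symmDiff T₁ T₂, (symmDiff T₁ T₂).max' hD < y := by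
    rcases Finset.mem_symmDiff.mp (Finset.max'_mem _ hD) with ⟨hx₁, hx₂⟩ | ⟨hx₂, hx₁⟩
    · obtain ⟨y, hy₂, hy₁, hxy⟩ := exists_lt_of_mem_activityInterval h₁ h₂ hA₁ hA₂ hx₁ hx₂
      exact ⟨y, Finset.mem_symmDiff.mpr (Or.inr ⟨hy₂, hy₁⟩), hxy⟩
    · obtain ⟨y, hy₁, hy₂, hxy⟩ := exists_lt_of_mem_activityInterval h₂ h₁ hA₂ hA₁ hx₂ hx₁
      exact ⟨y, Finset.mem_symmDiff.mpr (Or.inl ⟨hy₁, hy₂⟩), hxy⟩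
  exact (Finset.le_max' _ y hy).not_gt hxy

end Activity

section Greedy

variable {V E κ : Type} [Fintype E] [LinearOrder κ] {G : VWGraph V E} {φ : E → κ} {g : E}

/-- The output of Kruskal's algorithm scanning the edges by increasing `φ`. -/
noncomputable def greedyForest (G : VWGraph V E) (φ : E → κ) : Finset E :=
  Finset.univ.filter fun e => ¬ G.EndsConnected (Finset.univ.filter fun f => φ f < φ e) e

theorem isForest_greedyForest (hφ : Function.Injective φ) : G.IsForest (G.greedyForest φ) := by
  suffices ∀ s ⊆ G.greedyForest φ, G.IsForest s from this _ subset_rfl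
  intro s
  induction s using Finset.induction_on_max_value φ with
  | empty => exact fun _ => isForest_iff.mpr fun _ h => absurd h (Finset.notMem_empty _)
  | insert a s has hmax ih =>
    intro hs
    obtain ⟨ha, hs⟩ := Finset.insert_subset_iff.mp hs
    refine (ih hs).insert fun hc => (Finset.mem_filter.mp ha).2 (hc.mono fun x hx => ?_)
    exact Finset.mem_filter.mpr ⟨Finset.mem_univ x,
      (hmax x hx).lt_of_ne (hφ.ne (ne_of_mem_of_not_mem hx has))⟩

theorem endsConnected_greedyForest_filter [WellFoundedLT κ] (hg : g ∉ G.greedyForest φ) :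
    G.EndsConnected ((G.greedyForest φ).filter fun f => φ f < φ g) g := by
  induction g using (InvImage.wf φ wellFounded_lt).induction with
  | _ g ih =>
  have hg' : G.EndsConnected (Finset.univ.filter fun f => φ f < φ g) g := by
    simpa [greedyForest] using hg
  refine hg'.of_forall_endsConnected fun f hf => ?_
  have hfg : φ f < φ g := (Finset.mem_filter.mp hf).2
  by_cases hfT : f ∈ G.greedyForest φ
  · exact endsConnected_of_mem (Finset.mem_filter.mpr ⟨hfT, hfg⟩)
  · exact (ih f hfg hfT).mono
      (Finset.monotone_filter_right _ fun _ _ hxf => hxf.trans hfg)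

theorem isSpanningTree_greedyForest [WellFoundedLT κ] (hφ : Function.Injective φ) :
    G.IsSpanningTree (G.greedyForest φ) := by
  refine ⟨isForest_greedyForest hφ, fun u v =>
    ⟨(·.mono (Finset.subset_univ _)), (·.of_forall_endsConnected fun f _ => ?_)⟩⟩
  by_cases hf : f ∈ G.greedyForest φ
  · exact endsConnected_of_mem hf
  · exact (endsConnected_greedyForest_filter hf).mono (Finset.filter_subset _ _)

end Greedy

section Scan

variable {V E : Type} [LinearOrder E] {G : VWGraph V E} {A : Finset E} {e f : E}

/-- The scanning order whose greedy forest is the spanning tree of the activity interval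
containing `A`. -/
def scanKey (A : Finset E) (e : E) : Eᵒᵈ ⊕ₗ E :=
  if e ∈ A then toLex (Sum.inl (OrderDual.toDual e)) else toLex (Sum.inr e)

theorem scanKey_injective (A : Finset E) : Function.Injective (scanKey A) := by
  intro e f h
  unfold scanKey at h
  split_ifs at h <;> simp_all

theorem lt_of_scanKey_lt_of_mem (he : e ∈ A) (h : scanKey A f < scanKey A e) : e < f := by
  unfold scanKey at h
  split_ifs at h <;> simp_all

theorem lt_of_scanKey_lt_of_notMem (he : e ∉ A) (h : scanKey A e < scanKey A f) : e < f := by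
  unfold scanKey at h
  split_ifs at h <;> simp_all

variable [Fintype E]

theorem mem_activityInterval_greedyForest_scanKey :
    A ∈ G.activityInterval (G.greedyForest (scanKey A)) := by
  set T := G.greedyForest (scanKey A)
  have hT : G.IsSpanningTree T := isSpanningTree_greedyForest (scanKey_injective A)
  refine mem_activityInterval.mpr ⟨fun e heT heA => ?_, fun e heA heT => ?_⟩
  · refine intActive_of_forall_lt hT heT fun f hfe hfT =>
      (endsConnected_greedyForest_filter hfT).mono fun x hx => ?_
    obtain ⟨hxT, hxf⟩ := Finset.mem_filter.mp hx
    refine Finset.mem_erase.mpr ⟨?_, hxT⟩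
    rintro rfl
    exact (lt_of_scanKey_lt_of_notMem heA hxf).not_gt hfe
  · have he := endsConnected_greedyForest_filter heT
    refine ⟨heT, he.mono (Finset.filter_subset _ _), fun f hf => ?_⟩
    rcases mem_cycleEdges.mp hf with rfl | ⟨hfT, hef⟩
    · exact le_rfl
    refine (lt_of_scanKey_lt_of_mem heA ?_).le
    by_contra hfe
    refine hef (he.mono fun x hx => ?_)
    obtain ⟨hxT, hxe⟩ := Finset.mem_filter.mp hx
    exact Finset.mem_erase.mpr ⟨by rintro rfl; exact hfe hxe, hxT⟩

theorem sum_eq_sum_activityInterval {M : Type} [AddCommMonoid M] (G : VWGraph V E)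
    (F : Finset E → M) :
    ∑ A, F A = ∑ T ∈ Finset.univ.filter (fun T => G.IsSpanningTree T),
      ∑ A ∈ G.activityInterval T, F A := by
  rw [← Finset.sum_fiberwise_of_maps_to (g := fun A => G.greedyForest (scanKey A))
    fun A _ => Finset.mem_filter.mpr
      ⟨Finset.mem_univ _, isSpanningTree_greedyForest (scanKey_injective A)⟩]
  refine Finset.sum_congr rfl fun T hT => Finset.sum_congr ?_ fun _ _ => rfl
  ext A
  simp only [Finset.mem_filter, Finset.mem_univ, true_and]
  refine ⟨fun h => h ▸ mem_activityInterval_greedyForest_scanKey, fun h => ?_⟩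
  exact eq_of_mem_activityInterval (isSpanningTree_greedyForest (scanKey_injective A))
    (Finset.mem_filter.mp hT).2 mem_activityInterval_greedyForest_scanKey h

end Scan

section Components

variable {V₁ E₁ V₂ E₂ S M : Type} [Fintype V₁] [Fintype V₂] [AddCommMonoid S] [CommMonoid M]
  {G₁ : VWGraph V₁ E₁} {G₂ : VWGraph V₂ E₂} {A₁ : Finset E₁} {A₂ : Finset E₂}

theorem prod_compWeight_eq_of_surjective (π : V₁ → V₂) (hπ : Function.Surjective π)
    (hconn : ∀ u v, G₁.Connects A₁ u v ↔ G₂.Connects A₂ (π u) (π v))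
    (ω₁ : V₁ → S) (ω₂ : V₂ → S) (hω : ∀ y, ω₂ y = ∑ x ∈ Finset.univ.filter (π · = y), ω₁ x)
    (g : S → M) :
    ∏ c : G₁.Comp A₁, g (G₁.compWeight A₁ ω₁ c) = ∏ c : G₂.Comp A₂, g (G₂.compWeight A₂ ω₂ c) := by
  let F : G₁.Comp A₁ → G₂.Comp A₂ :=
    Quotient.map π fun a b hab => (hconn a b).mp hab
  have hF : Function.Bijective F := by
    refine ⟨fun c c' h => ?_, fun c => ?_⟩
    · induction c using Quotient.ind
      induction c' using Quotient.ind
      exact Quotient.sound ((hconn _ _).mpr (Quotient.exact h))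
    · induction c using Quotient.ind with | _ y =>
      obtain ⟨x, rfl⟩ := hπ y
      exact ⟨Quotient.mk _ x, rfl⟩
  refine Fintype.prod_bijective F hF _ _ fun c => congrArg g ?_
  simp only [compWeight, hω]
  rw [Finset.sum_fiberwise_eq_sum_filter Finset.univ (G₂.compVerts A₂ (F c)) π ω₁]
  refine Finset.sum_congr ?_ fun _ _ => rfl
  ext x
  simp only [compVerts, Finset.mem_filter, Finset.mem_univ, true_and]
  exact hF.1.eq_iff.symm

theorem prod_compWeight_congr {A₁' : Finset E₁}
    (hconn : ∀ u v, G₁.Connects A₁ u v ↔ G₁.Connects A₁' u v) (ω : V₁ → S) (g : S → M) :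
    ∏ c : G₁.Comp A₁, g (G₁.compWeight A₁ ω c) = ∏ c : G₁.Comp A₁', g (G₁.compWeight A₁' ω c) :=
  prod_compWeight_eq_of_surjective id Function.surjective_id hconn ω ω
    (fun y => by rw [Finset.sum_filter]; simp) g

end Components

section Contraction

variable {V E : Type} {G : VWGraph V E} {T B : Finset E}

theorem contractIn_ends_eq {f : ↥(T \ B)} {x y : V} (h : G.ends f.1 = s(x, y)) :
    (G.contractIn T B).ends f = s(Quotient.mk _ x, Quotient.mk _ y) := by
  rw [contractIn]
  exact congrArg (Sym2.map _) h

theorem connects_contractIn_iff (A : Finset ↥(T \ B)) (u v : V) :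
    (G.contractIn T B).Connects A (Quotient.mk _ u) (Quotient.mk _ v) ↔
      G.Connects (B ∪ A.map (Function.Embedding.subtype _)) u v := by
  set C := B ∪ A.map (Function.Embedding.subtype _)
  constructor
  · -- every edge of the contracted graph joins classes that merge once `A` is added to `B`
    let merge : G.Comp B → G.Comp C :=
      Quotient.map id fun _ _ h => Connects.mono Finset.subset_union_left h
    suffices ∀ c c', (G.contractIn T B).Connects A c c' → merge c = merge c' from
      fun h => Quotient.exact (this _ _ h)
    intro c c' h
    induction h with
    | rel c c' hcc' =>
      obtain ⟨f, hf, hends⟩ := hcc'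
      obtain ⟨x, y, hxy⟩ := G.exists_ends_eq f.1
      have hfC : f.1 ∈ C := Finset.mem_union_right _ (Finset.mem_map_of_mem _ hf)
      have hmerge : merge (Quotient.mk _ x) = merge (Quotient.mk _ y) :=
        Quotient.sound (connects_of_ends_eq hfC hxy)
      rcases Sym2.eq_iff.mp ((contractIn_ends_eq hxy).symm.trans hends) with ⟨rfl, rfl⟩ | ⟨rfl, rfl⟩
      exacts [hmerge, hmerge.symm]
    | refl => rfl
    | symm _ _ _ ih => exact ih.symm
    | trans _ _ _ _ _ ih ih' => exact ih.trans ih'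
  · intro h
    induction h with
    | rel x y hxy =>
      obtain ⟨e, he, hends⟩ := hxy
      rcases Finset.mem_union.mp he with heB | heA
      · rw [Quotient.sound (connects_of_ends_eq heB hends)]
        exact connects_refl _ _ _
      · obtain ⟨f, hf, rfl⟩ := Finset.mem_map.mp heA
        exact Relation.EqvGen.rel _ _ ⟨f, hf, contractIn_ends_eq hends⟩
    | refl x => exact connects_refl _ _ _
    | symm _ _ _ ih => exact ih.symm
    | trans _ _ _ _ _ ih ih' => exact ih.trans ih'

variable {S R : Type} [Fintype V] [AddCommMonoid S] [CommRing R]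

theorem Vpoly_contractIn [DecidableEq E] (ω : V → S) (γ : E → R) :
    (G.contractIn T B).Vpoly (G.compWeight B ω) (fun f => γ f.1) =
      ∑ C ∈ (T \ B).powerset, (∏ c : G.Comp (B ∪ C),
        MvPolynomial.X (G.compWeight (B ∪ C) ω c)) * MvPolynomial.C (∏ e ∈ C, γ e) := by
  obtain rfl : ‹DecidableEq E› = fun a b => Classical.propDecidable (a = b) := Subsingleton.elim _ _
  refine Finset.sum_nbij' (fun A => A.map (Function.Embedding.subtype _))
    (fun C => C.subtype (· ∈ T \ B))
    (fun A _ => Finset.mem_powerset.mpr fun e he => A.property_of_mem_map_subtype he)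
    (fun _ _ => Finset.mem_univ _) (fun A _ => by ext; simp)
    (fun C hC => Finset.subtype_map_of_mem (Finset.mem_powerset.mp hC)) fun A _ => ?_
  rw [Finset.prod_map]
  congr 1
  exact (prod_compWeight_eq_of_surjective (G₁ := G) (Quotient.mk _)
    Quotient.mk_surjective (fun u v => (connects_contractIn_iff A u v).symm) ω (G.compWeight B ω)
    (fun _ => rfl) MvPolynomial.X).symm

end Contraction

section Expansion

variable {V E : Type} [Fintype E] [LinearOrder E] {G : VWGraph V E} {A T : Finset E}

theorem intInactives_union_intActives : G.intInactives T ∪ G.intActives T = T := by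
  ext e
  simp only [Finset.mem_union, mem_intInactives, mem_intActives]
  tauto

theorem disjoint_intInactives_intActives : Disjoint (G.intInactives T) (G.intActives T) :=
  Finset.disjoint_left.mpr fun _ h h' => (mem_intInactives.mp h).2 (mem_intActives.mp h').2

theorem disjoint_extActives (hA : A ⊆ T) : Disjoint A (G.extActives T) :=
  Finset.disjoint_left.mpr fun _ h h' => (mem_extActives.mp h').1 (hA h)

theorem sdiff_intInactives : T \ G.intInactives T = G.intActives T := by
  ext e
  simp only [Finset.mem_sdiff, mem_intInactives, mem_intActives]
  tauto

theorem connects_union_extActives_iff (hT : G.IsSpanningTree T) (hA : G.intInactives T ⊆ A)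
    {C : Finset E} (hC : C ⊆ G.extActives T) (u v : V) :
    G.Connects (A ∪ C) u v ↔ G.Connects A u v :=
  ⟨(·.of_forall_endsConnected fun _ he => (Finset.mem_union.mp he).elim endsConnected_of_mem
      fun heC => ((mem_extActives.mp (hC heC)).endsConnected_intInactives hT).mono hA),
    (·.mono Finset.subset_union_left)⟩

variable {S R : Type} [Fintype V] [AddCommMonoid S] [CommRing R]

theorem sum_activityInterval (hT : G.IsSpanningTree T) (ω : V → S) (γ : E → R) :
    ∑ A ∈ G.activityInterval T,
      (∏ c : G.Comp A, MvPolynomial.X (G.compWeight A ω c)) * MvPolynomial.C (∏ e ∈ A, γ e) =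
      (∏ e ∈ G.intInactives T, MvPolynomial.C (γ e)) *
        (∏ e ∈ G.extActives T, (MvPolynomial.C (γ e) + 1)) *
        (G.contractIn T (G.intInactives T)).Vpoly
          (G.compWeight (G.intInactives T) ω) (fun f => γ f.1) := by
  have hIT : G.intInactives T ⊆ T := Finset.filter_subset _ _
  have hAT : G.intActives T ⊆ T := Finset.filter_subset _ _
  have hinterval : G.activityInterval T =
      Finset.Icc (G.intInactives T) (G.intInactives T ∪ G.intActives T ∪ G.extActives T) := by
    rw [activityInterval, intInactives_union_intActives]
  have hterm : ∀ B ∈ (G.intActives T).powerset, ∀ C ∈ (G.extActives T).powerset,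
      (∏ c : G.Comp (G.intInactives T ∪ B ∪ C),
        MvPolynomial.X (G.compWeight (G.intInactives T ∪ B ∪ C) ω c)) *
        MvPolynomial.C (∏ e ∈ G.intInactives T ∪ B ∪ C, γ e) =
      (∏ e ∈ G.intInactives T, MvPolynomial.C (γ e)) *
        ((∏ c : G.Comp (G.intInactives T ∪ B),
          MvPolynomial.X (G.compWeight (G.intInactives T ∪ B) ω c)) *
          MvPolynomial.C (∏ e ∈ B, γ e)) *
        ∏ e ∈ C, MvPolynomial.C (γ e) := by
    intro B hB C hC
    rw [Finset.mem_powerset] at hB hC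
    have hIB : Disjoint (G.intInactives T) B := disjoint_intInactives_intActives.mono_right hB
    have hIBC : Disjoint (G.intInactives T ∪ B) C :=
      (disjoint_extActives (Finset.union_subset hIT (hB.trans hAT))).mono_right hC
    rw [prod_compWeight_congr (connects_union_extActives_iff hT Finset.subset_union_left hC),
      Finset.prod_union hIBC, Finset.prod_union hIB]
    simp only [map_mul, map_prod]
    ring
  rw [hinterval, Finset.sum_Icc_eq_sum_powerset_sum_powerset disjoint_intInactives_intActives
    (disjoint_extActives hIT) (disjoint_extActives hAT), Vpoly_contractIn, sdiff_intInactives,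
    Finset.prod_add_one, Finset.sum_congr rfl fun B hB => Finset.sum_congr rfl (hterm B hB)]
  simp only [← Finset.mul_sum, ← Finset.sum_mul]
  ring

end Expansion

end VWGraph

/-- Spanning tree expansion of the V-polynomial:
`V(G) = Σ_{T∈𝒯(G)} (∏_{II} γ_e)(∏_{EA}(γ_e+1)) V(T / II(G,T))`. -/
theorem Vpoly_spanning_tree_expansion {V E S R : Type} [Fintype V] [Fintype E]
    [LinearOrder E] [AddCommMonoid S] [CommRing R] (G : VWGraph V E)
    (ω : V → S) (γ : E → R) :
    G.Vpoly ω γ =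
      ∑ T ∈ Finset.univ.filter (fun T => G.IsSpanningTree T),
        (∏ e ∈ G.intInactives T, MvPolynomial.C (γ e)) *
        (∏ e ∈ G.extActives T, (MvPolynomial.C (γ e) + 1)) *
        (G.contractIn T (G.intInactives T)).Vpoly
          (G.compWeight (G.intInactives T) ω) (fun f => γ f.1) :=
  (G.sum_eq_sum_activityInterval _).trans <| Finset.sum_congr rfl fun _ hT =>
    VWGraph.sum_activityInterval (Finset.mem_filter.mp hT).2 ω γ
end
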